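/- arXiv:1604.02307 — 7 statements merged into one kernel-verified Lean document; each statement's English description precedes it below -/
import Mathlib

section
/- There exists a constant C > 0 such that for every integer n with n ≥ 2k/δ and every integer i ≥ k the following three bounds hold: (a) |g_{i,n}(s)| ≤ C (i/n − s)^α for all s ∈ [(i−k)/n, i/n]; (b) |g_{i,n}(s)| ≤ C n^{−k} ((i−k)/n − s)^{α−k} for all s ∈ (i/n − δ, (i−k)/n); (c) |g_{i,n}(s)| ≤ C n^{−k} ( 1_{[(i−k)/n−δ, i/n−δ]}(s) + |g^{(k)}((i−k)/n − s)|·1_{(−∞,(i−k)/n−δ)}(s) ) for all s ≤ i/n − δ. -/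
/-! The sum defining `g_{i,n}(s)` is the `k`-th forward difference of `g` with step `1/n` at
`y = (i - k)/n - s`, whose stencil is `[y, i/n - s]`. In (a) each of its `k + 1` terms is bounded
by `C₁ (i/n - s)^α`. Otherwise the mean value theorem, applied once per difference, bounds a
`k`-th forward difference by `h^k` times the supremum of `|g^{(k)}|` over the stencil; this
supremum is at most `C₁ y^{α-k}` in (b), at most `|g^{(k)}(y)|` when `y > δ` by monotonicity,
and at most `C₁ (δ/2)^{α-k}` on `[δ/2, ∞)`, where continuity of `g^{(k)}` at `δ` joins the
bound below `δ` to the monotone regime above it. -/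

open Set Filter Topology

theorem sum_alternating_choose_eq_fwdDiff_iter {R : Type*} [CommRing R] (f : R → R) (k : ℕ)
    (y h : R) :
    ∑ j ∈ Finset.range (k + 1), (-1 : R) ^ j * k.choose j * f (y + (k - j) * h) =
      (fwdDiff h)^[k] f y := by
  rw [fwdDiff_iter_eq_sum_shift, ← Finset.sum_range_reflect]
  refine Finset.sum_congr rfl fun j hj => ?_
  have hjk : j ≤ k := Nat.lt_succ_iff.mp (Finset.mem_range.mp hj)
  simp [Nat.choose_symm hjk, Nat.cast_sub hjk, nsmul_eq_mul]

theorem sum_alternating_choose_div_sub_eq_fwdDiff_iter {K : Type*} [Field K] (f : K → K)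
    (k : ℕ) (i n s : K) :
    ∑ j ∈ Finset.range (k + 1), (-1 : K) ^ j * k.choose j * f ((i - j) / n - s) =
      (fwdDiff (1 / n))^[k] f ((i - k) / n - s) := by
  rw [← sum_alternating_choose_eq_fwdDiff_iter]
  exact Finset.sum_congr rfl fun j _ => by ring_nf

theorem mul_one_div_le_half_of_two_mul_div_le {k δ n : ℝ} (hk : 0 < k) (hδ : 0 < δ)
    (hn : 2 * k / δ ≤ n) : k * (1 / n) ≤ δ / 2 := by
  have hn0 : 0 < n := (by positivity : 0 < 2 * k / δ).trans_le hn
  rw [div_le_iff₀ hδ] at hn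
  rw [mul_one_div, div_le_div_iff₀ hn0 two_pos]
  linarith

theorem abs_fwdDiff_iter_le_of_abs_le {f : ℝ → ℝ} {x h B : ℝ} {k : ℕ}
    (hB : ∀ j ≤ k, |f (x + j * h)| ≤ B) : |(fwdDiff h)^[k] f x| ≤ 2 ^ k * B := by
  induction k generalizing f B with
  | zero => simpa using hB 0 le_rfl
  | succ k ih =>
    rw [Function.iterate_succ_apply, pow_succ, mul_assoc]
    refine ih fun j hj => ?_
    have hj' : x + j * h + h = x + (j + 1 : ℕ) * h := by push_cast; ring
    calc |f (x + j * h + h) - f (x + j * h)|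
        ≤ |f (x + j * h + h)| + |f (x + j * h)| := abs_sub _ _
      _ ≤ B + B := by
        rw [hj']
        exact add_le_add (hB _ (by omega)) (hB _ (by omega))
      _ = 2 * B := by ring

section Smooth

variable {f : ℝ → ℝ} {a h : ℝ}

theorem ContDiffOn.fwdDiff_Ioi {n : ℕ} (hf : ContDiffOn ℝ n f (Ioi a)) (hh : 0 ≤ h) :
    ContDiffOn ℝ n (fwdDiff h f) (Ioi a) :=
  (hf.comp (contDiff_id.add contDiff_const).contDiffOn fun _ hy =>
    lt_add_of_lt_of_nonneg hy hh).sub hf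

theorem iteratedDeriv_fwdDiff_of_contDiffOn_Ioi {k : ℕ} (hf : ContDiffOn ℝ k f (Ioi a))
    (hh : 0 ≤ h) {t : ℝ} (ht : a < t) :
    iteratedDeriv k (fwdDiff h f) t = iteratedDeriv k f (t + h) - iteratedDeriv k f t := by
  have hshift : ContDiffAt ℝ k (fun y => f (y + h)) t :=
    (hf.contDiffAt (Ioi_mem_nhds (lt_add_of_lt_of_nonneg ht hh))).comp t
      (contDiffAt_id.add contDiffAt_const)
  rw [show fwdDiff h f = (fun y => f (y + h)) - f from rfl,
    iteratedDeriv_sub hshift (hf.contDiffAt (Ioi_mem_nhds ht)), iteratedDeriv_comp_add_const]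

theorem hasDerivAt_iteratedDeriv_of_contDiffOn {k : ℕ} {s : Set ℝ}
    (hf : ContDiffOn ℝ (k + 1) f s) (hs : IsOpen s) {x : ℝ} (hx : x ∈ s) :
    HasDerivAt (iteratedDeriv k f) (iteratedDeriv (k + 1) f x) x := by
  have hdiff : DifferentiableAt ℝ (iteratedDerivWithin k f s) x :=
    (hf.differentiableOn_iteratedDerivWithin (by exact_mod_cast k.lt_succ_self)
      hs.uniqueDiffOn x hx).differentiableAt (hs.mem_nhds hx)
  rw [iteratedDeriv_succ]
  exact (hdiff.congr_of_eventuallyEq (eventuallyEq_of_mem (hs.mem_nhds hx)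
    (iteratedDerivWithin_of_isOpen hs)).symm).hasDerivAt

theorem abs_fwdDiff_iter_le_mul_pow {k : ℕ} {x M : ℝ} (hf : ContDiffOn ℝ k f (Ioi a))
    (hx : a < x) (hh : 0 ≤ h) (hM : ∀ t ∈ Icc x (x + k * h), |iteratedDeriv k f t| ≤ M) :
    |(fwdDiff h)^[k] f x| ≤ M * h ^ k := by
  induction k generalizing f M with
  | zero => simpa using hM x (by simp)
  | succ k ih =>
    rw [Function.iterate_succ_apply, pow_succ', ← mul_assoc]
    have hfk : ContDiffOn ℝ k f (Ioi a) := hf.of_le (by exact_mod_cast k.le_succ)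
    refine ih (hfk.fwdDiff_Ioi hh) fun t ht => ?_
    have hat : a < t := hx.trans_le ht.1
    rw [iteratedDeriv_fwdDiff_of_contDiffOn_Ioi hfk hh hat]
    have hderiv : ∀ u ∈ Icc t (t + h), HasDerivWithinAt (iteratedDeriv k f)
        (iteratedDeriv (k + 1) f u) (Icc t (t + h)) u := fun u hu =>
      (hasDerivAt_iteratedDeriv_of_contDiffOn hf isOpen_Ioi
        (hat.trans_le hu.1)).hasDerivWithinAt
    have hbound : ∀ u ∈ Ico t (t + h), ‖iteratedDeriv (k + 1) f u‖ ≤ M := fun u hu =>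
      hM u ⟨ht.1.trans hu.1, by push_cast; linarith [ht.2, hu.2]⟩
    simpa using norm_image_sub_le_of_norm_deriv_le_segment' hderiv hbound (t + h)
      ⟨le_add_of_nonneg_right hh, le_rfl⟩

end Smooth

theorem abs_le_of_continuousAt_of_abs_antitone {φ : ℝ → ℝ} {a b B : ℝ} (hab : a < b)
    (hφ : ContinuousAt φ b) (hB : ∀ t ∈ Ico a b, |φ t| ≤ B)
    (hanti : AntitoneOn (fun t => |φ t|) (Ioi b)) {t : ℝ} (ht : a ≤ t) : |φ t| ≤ B := by
  have hlim : Tendsto (fun u => |φ u|) (𝓝 b) (𝓝 |φ b|) := hφ.abs.tendsto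
  have hb : |φ b| ≤ B :=
    le_of_tendsto (hlim.mono_left (nhdsWithin_le_nhds (s := Iio b))) <| by
      filter_upwards [Ioo_mem_nhdsLT hab] with u hu using hB u ⟨hu.1.le, hu.2⟩
  rcases lt_trichotomy t b with htb | rfl | hbt
  · exact hB t ⟨ht, htb⟩
  · exact hb
  · refine le_trans (ge_of_tendsto (hlim.mono_left (nhdsWithin_le_nhds (s := Ioi b))) ?_) hb
    filter_upwards [Ioo_mem_nhdsGT hbt] with u hu using hanti hu.1 hbt hu.2.le

section Kernel

variable {k : ℕ} {α δ C₁ : ℝ} {g : ℝ → ℝ}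

theorem abs_le_mul_rpow_of_le (hα : 0 ≤ α) (hC₁ : 0 ≤ C₁) (hg0 : ∀ t ≤ (0 : ℝ), g t = 0)
    (hgα : ∀ t ∈ Ioo (0 : ℝ) δ, |g t| ≤ C₁ * t ^ α) {t u : ℝ} (htu : t ≤ u) (hu : 0 ≤ u)
    (huδ : u < δ) : |g t| ≤ C₁ * u ^ α := by
  rcases le_or_gt t 0 with ht | ht
  · rw [hg0 t ht, abs_zero]
    positivity
  · exact (hgα t ⟨ht, htu.trans_lt huδ⟩).trans (by gcongr)

theorem abs_fwdDiff_iter_le_mul_rpow (hα : 0 ≤ α) (hC₁ : 0 ≤ C₁) (hg0 : ∀ t ≤ (0 : ℝ), g t = 0)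
    (hgα : ∀ t ∈ Ioo (0 : ℝ) δ, |g t| ≤ C₁ * t ^ α) {x h : ℝ} (hh : 0 ≤ h)
    (hx : 0 ≤ x + k * h) (hxδ : x + k * h < δ) :
    |(fwdDiff h)^[k] g x| ≤ 2 ^ k * C₁ * (x + k * h) ^ α := by
  rw [mul_assoc]
  refine abs_fwdDiff_iter_le_of_abs_le fun j hj => abs_le_mul_rpow_of_le hα hC₁ hg0 hgα ?_ hx hxδ
  gcongr

theorem abs_fwdDiff_iter_le_mul_pow_mul_rpow (hαk : α ≤ k) (hC₁ : 0 ≤ C₁)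
    (hg : ContDiffOn ℝ k g (Ioi 0))
    (hgk : ∀ t ∈ Ioo (0 : ℝ) δ, |iteratedDeriv k g t| ≤ C₁ * t ^ (α - k)) {x h : ℝ}
    (hh : 0 ≤ h) (hx : 0 < x) (hxδ : x + k * h < δ) :
    |(fwdDiff h)^[k] g x| ≤ C₁ * h ^ k * x ^ (α - k) := by
  rw [mul_right_comm]
  refine abs_fwdDiff_iter_le_mul_pow hg hx hh fun t ht => ?_
  exact (hgk t ⟨hx.trans_le ht.1, ht.2.trans_lt hxδ⟩).trans <| mul_le_mul_of_nonneg_left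
    (Real.rpow_le_rpow_of_nonpos hx ht.1 (by linarith)) hC₁

theorem abs_iteratedDeriv_le_of_half_le (hδ : 0 < δ) (hαk : α ≤ k) (hC₁ : 0 ≤ C₁)
    (hg : ContDiffOn ℝ k g (Ioi 0))
    (hgk : ∀ t ∈ Ioo (0 : ℝ) δ, |iteratedDeriv k g t| ≤ C₁ * t ^ (α - k))
    (hgkdec : ∀ s t : ℝ, δ < s → s ≤ t → |iteratedDeriv k g t| ≤ |iteratedDeriv k g s|)
    {t : ℝ} (ht : δ / 2 ≤ t) : |iteratedDeriv k g t| ≤ C₁ * (δ / 2) ^ (α - k) := by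
  have hcont : ContinuousOn (iteratedDeriv k g) (Ioi 0) :=
    (hg.continuousOn_iteratedDerivWithin le_rfl (uniqueDiffOn_Ioi 0)).congr
      (iteratedDerivWithin_of_isOpen isOpen_Ioi).symm
  refine abs_le_of_continuousAt_of_abs_antitone (half_lt_self hδ)
    (hcont.continuousAt (Ioi_mem_nhds hδ)) (fun u hu => ?_)
    (fun s hs t _ hst => hgkdec s t hs hst) ht
  exact (hgk u ⟨(half_pos hδ).trans_le hu.1, hu.2⟩).trans <| mul_le_mul_of_nonneg_left
    (Real.rpow_le_rpow_of_nonpos (half_pos hδ) hu.1 (by linarith)) hC₁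

end Kernel

/-- Lemma 4.1: bounds on the kernel increments `g_{i,n}`. -/
theorem stmt_0
    (k : ℕ) (hk : 1 ≤ k) (α δ C₁ : ℝ)
    (hα : 0 < α) (hαk : α < k) (hδ : 0 < δ) (hC₁ : 0 < C₁)
    (g : ℝ → ℝ)
    (hg0 : ∀ t ≤ (0 : ℝ), g t = 0)
    (hgsmooth : ContDiffOn ℝ k g (Set.Ioi 0))
    (hgα : ∀ t ∈ Set.Ioo (0 : ℝ) δ, |g t| ≤ C₁ * t ^ α)
    (hgk : ∀ t ∈ Set.Ioo (0 : ℝ) δ, |iteratedDeriv k g t| ≤ C₁ * t ^ (α - k))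
    (hgkdec : ∀ s t : ℝ, δ < s → s ≤ t → |iteratedDeriv k g t| ≤ |iteratedDeriv k g s|) :
    ∃ C > (0 : ℝ), ∀ n i : ℕ, (2 * k / δ : ℝ) ≤ n → k ≤ i →
      (∀ s ∈ Set.Icc (((i : ℝ) - k) / n) ((i : ℝ) / n),
        |∑ j ∈ Finset.range (k + 1),
            (-1 : ℝ) ^ j * (k.choose j) * g (((i : ℝ) - j) / n - s)|
          ≤ C * ((i : ℝ) / n - s) ^ α) ∧
      (∀ s ∈ Set.Ioo ((i : ℝ) / n - δ) (((i : ℝ) - k) / n),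
        |∑ j ∈ Finset.range (k + 1),
            (-1 : ℝ) ^ j * (k.choose j) * g (((i : ℝ) - j) / n - s)|
          ≤ C * (n : ℝ) ^ (-(k : ℝ)) * (((i : ℝ) - k) / n - s) ^ (α - k)) ∧
      (∀ s : ℝ, s ≤ (i : ℝ) / n - δ →
        |∑ j ∈ Finset.range (k + 1),
            (-1 : ℝ) ^ j * (k.choose j) * g (((i : ℝ) - j) / n - s)|
          ≤ C * (n : ℝ) ^ (-(k : ℝ)) *
            ((if s ∈ Set.Icc (((i : ℝ) - k) / n - δ) ((i : ℝ) / n - δ) then (1 : ℝ) else 0) +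
              (if s < ((i : ℝ) - k) / n - δ
                then |iteratedDeriv k g (((i : ℝ) - k) / n - s)| else 0))) := by
  set M := C₁ * (δ / 2) ^ (α - k)
  have hM : 0 ≤ M := by positivity
  -- one summand per regime: (a), (b), and the cases `s < (i-k)/n - δ` and `s ≥ (i-k)/n - δ` of (c)
  refine ⟨2 ^ k * C₁ + C₁ + 1 + M, by positivity, fun n i hn _ => ?_⟩
  have h2k : 0 ≤ 2 ^ k * C₁ := by positivity
  have hkn : (k : ℝ) * (1 / n) ≤ δ / 2 :=
    mul_one_div_le_half_of_two_mul_div_le (by exact_mod_cast hk) hδ hn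
  have hstencil : ∀ s : ℝ, ((i : ℝ) - k) / n - s + k * (1 / n) = i / n - s := fun s => by ring
  have hnk : (n : ℝ) ^ (-(k : ℝ)) = (1 / n) ^ k := by
    rw [Real.rpow_neg n.cast_nonneg, Real.rpow_natCast, one_div, inv_pow]
  simp only [sum_alternating_choose_div_sub_eq_fwdDiff_iter, hnk]
  refine ⟨fun s hs => ?_, fun s hs => ?_, fun s hs => ?_⟩
  · rw [← hstencil]
    refine (abs_fwdDiff_iter_le_mul_rpow hα.le hC₁.le hg0 hgα (by positivity) ?_ ?_).trans ?_
    · linarith [hstencil s, hs.2]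
    · linarith [hstencil s, hs.1]
    · exact mul_le_mul_of_nonneg_right (by linarith)
        (Real.rpow_nonneg (by linarith [hstencil s, hs.2]) _)
  · have hy : 0 < ((i : ℝ) - k) / n - s := by linarith [hs.2]
    refine (abs_fwdDiff_iter_le_mul_pow_mul_rpow hαk.le hC₁.le hgsmooth hgk (by positivity) hy
      (by linarith [hstencil s, hs.1])).trans ?_
    gcongr
    linarith
  · set y := ((i : ℝ) - k) / n - s
    have hy : δ / 2 ≤ y := by linarith [hstencil s]
    by_cases hlt : s < ((i : ℝ) - k) / n - δ
    · rw [if_neg fun hmem => hmem.1.not_gt hlt, if_pos hlt, zero_add, mul_assoc,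
        mul_comm ((1 / n : ℝ) ^ k)]
      refine (abs_fwdDiff_iter_le_mul_pow hgsmooth (by linarith) (by positivity)
        fun t ht => hgkdec y t (by linarith) ht.1).trans ?_
      exact le_mul_of_one_le_left (by positivity) (by linarith)
    · rw [if_pos ⟨not_lt.mp hlt, hs⟩, if_neg hlt, add_zero, mul_one]
      refine (abs_fwdDiff_iter_le_mul_pow hgsmooth (by linarith) (by positivity)
        fun t ht => abs_iteratedDeriv_le_of_half_le hδ hαk.le hC₁.le hgsmooth hgk hgkdec
          (hy.trans ht.1)).trans ?_
      gcongr
      linarith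
end

section
/- Let ν be a Lévy measure on ℝ and suppose there exist θ ∈ (0, 2) and C₀ > 0 with ν({x : |x| ≥ t}) ≤ C₀ t^{−θ} for all t ≥ 1, and let β' ∈ (0, 2] satisfy ∫_{|x|≤1} |x|^{β'} ν(dx) < ∞. Then there exists C > 0 such that for all u ∈ ℝ: ∫_ℝ min(|u x|², 1) ν(dx) ≤ C ( |u|^θ · 1_{|u|≤1} + |u|^{β'} · 1_{|u|>1} ). -/
/-!
Split ℝ at `|x| = 1`. On the unit ball, `min (|u x|², 1) ≤ |u|^p |x|^β'` with `p = θ` for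
`|u| ≤ 1` and `p = β'` for `|u| > 1`, so that part is controlled by the `β'`-moment. Off the unit
ball, for `|u| > 1` bound the integrand by `1` and use `ν(|x| > 1) ≤ C₀`; for `|u| ≤ 1` the
layer-cake formula reduces the integral to `∫₀¹ ν(|x| > 1, |x| ≥ √t / |u|) dt`, which the tail
bound makes at most `C₀ |u|^θ ∫₀¹ t^(-θ/2) dt`, finite because `θ < 2`.
-/

open MeasureTheory Set
open scoped ENNReal

lemma min_sq_one_le_rpow {a p : ℝ} (ha : 0 ≤ a) (hp : 0 < p) (hp2 : p ≤ 2) :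
    min (a ^ 2) 1 ≤ a ^ p := by
  rcases ha.eq_or_lt with rfl | ha
  · simp [Real.zero_rpow hp.ne']
  rcases le_or_gt a 1 with ha1 | ha1
  · calc min (a ^ 2) 1 ≤ a ^ (2 : ℝ) := by rw [Real.rpow_two]; exact min_le_left _ _
      _ ≤ a ^ p := Real.rpow_le_rpow_of_exponent_ge ha ha1 hp2
  · exact (min_le_right _ _).trans (Real.one_le_rpow ha1.le hp.le)

lemma min_sq_one_le_rpow_mul_rpow {a b p q : ℝ} (ha : 0 ≤ a) (ha1 : a ≤ 1) (hb : 0 ≤ b)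
    (hb1 : b ≤ 1) (hp : 0 ≤ p) (hp2 : p ≤ 2) (hq : 0 ≤ q) (hq2 : q ≤ 2) :
    min ((a * b) ^ 2) 1 ≤ a ^ p * b ^ q := by
  have hsq : ∀ {c r : ℝ}, 0 ≤ c → c ≤ 1 → 0 ≤ r → r ≤ 2 → c ^ 2 ≤ c ^ r := fun hc hc1 hr hr2 => by
    rw [← Real.rpow_two]; exact Real.rpow_le_rpow_of_exponent_ge' hc hc1 hr hr2
  calc min ((a * b) ^ 2) 1 ≤ a ^ 2 * b ^ 2 := by rw [← mul_pow]; exact min_le_left _ _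
    _ ≤ a ^ p * b ^ q :=
      mul_le_mul (hsq ha ha1 hp hp2) (hsq hb hb1 hq hq2) (by positivity) (by positivity)

lemma setLIntegral_ofReal_le_ofReal_mul {α : Type*} [MeasurableSpace α] {μ : Measure α}
    {s : Set α} {f g : α → ℝ} (hg : Measurable g) {c : ℝ} (hc : 0 ≤ c)
    (hfg : ∀ x ∈ s, f x ≤ c * g x) :
    ∫⁻ x in s, ENNReal.ofReal (f x) ∂μ ≤ ENNReal.ofReal c * ∫⁻ x in s, ENNReal.ofReal (g x) ∂μ := by
  rw [← lintegral_const_mul _ hg.ennreal_ofReal]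
  refine setLIntegral_mono (by fun_prop) fun x hx => ?_
  rw [← ENNReal.ofReal_mul hc]
  exact ENNReal.ofReal_le_ofReal (hfg x hx)

lemma lintegral_Ioc_zero_one_ofReal_rpow {r : ℝ} (hr : -1 < r) :
    ∫⁻ t in Ioc (0 : ℝ) 1, ENNReal.ofReal (t ^ r) = ENNReal.ofReal (1 / (r + 1)) := by
  have hint : IntegrableOn (fun t : ℝ => t ^ r) (Ioc 0 1) :=
    (intervalIntegrable_iff_integrableOn_Ioc_of_le zero_le_one).1
      (intervalIntegral.intervalIntegrable_rpow' hr)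
  rw [← ofReal_integral_eq_lintegral_ofReal hint
    ((ae_restrict_iff' measurableSet_Ioc).2 (.of_forall fun t ht => Real.rpow_nonneg ht.1.le _)),
    ← intervalIntegral.integral_of_le zero_le_one, integral_rpow (.inl hr),
    Real.one_rpow, Real.zero_rpow (by linarith)]
  norm_num

lemma measurableSet_abs_le_one : MeasurableSet {x : ℝ | |x| ≤ 1} :=
  measurableSet_le (by fun_prop) (by fun_prop)

section PowerTail

variable {ν : Measure ℝ} {θ C₀ β' : ℝ}

lemma measure_compl_unitBall_le
    (htail : ∀ t : ℝ, 1 ≤ t → ν {x : ℝ | t ≤ |x|} ≤ ENNReal.ofReal (C₀ * t ^ (-θ))) :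
    ν {x : ℝ | |x| ≤ 1}ᶜ ≤ ENNReal.ofReal C₀ := by
  calc ν {x : ℝ | |x| ≤ 1}ᶜ ≤ ν {x : ℝ | 1 ≤ |x|} :=
        measure_mono fun x (hx : ¬|x| ≤ 1) => le_of_lt (not_le.1 hx)
    _ ≤ ENNReal.ofReal C₀ := by simpa using htail 1 le_rfl

lemma restrict_compl_unitBall_tail_le
    (htail : ∀ t : ℝ, 1 ≤ t → ν {x : ℝ | t ≤ |x|} ≤ ENNReal.ofReal (C₀ * t ^ (-θ)))
    (hθ : 0 ≤ θ) (hC₀ : 0 ≤ C₀) {s : ℝ} (hs : 0 < s) :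
    ν.restrict {x : ℝ | |x| ≤ 1}ᶜ {x : ℝ | s ≤ |x|} ≤ ENNReal.ofReal (C₀ * s ^ (-θ)) := by
  rcases le_or_gt 1 s with hs1 | hs1
  · exact (Measure.restrict_apply_le _ _).trans (htail s hs1)
  · calc ν.restrict {x : ℝ | |x| ≤ 1}ᶜ {x : ℝ | s ≤ |x|} ≤ ν {x : ℝ | |x| ≤ 1}ᶜ :=
          (measure_mono (subset_univ _)).trans_eq (Measure.restrict_apply_univ _)
      _ ≤ ENNReal.ofReal C₀ := measure_compl_unitBall_le htail
      _ ≤ ENNReal.ofReal (C₀ * s ^ (-θ)) := ENNReal.ofReal_le_ofReal <| le_mul_of_one_le_right hC₀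
          (Real.one_le_rpow_of_pos_of_le_one_of_nonpos hs hs1.le (neg_nonpos.2 hθ))

lemma restrict_compl_unitBall_lt_min_sq_le
    (htail : ∀ t : ℝ, 1 ≤ t → ν {x : ℝ | t ≤ |x|} ≤ ENNReal.ofReal (C₀ * t ^ (-θ)))
    (hθ : 0 ≤ θ) (hC₀ : 0 ≤ C₀) (u : ℝ) {t : ℝ} (ht : 0 < t) :
    ν.restrict {x : ℝ | |x| ≤ 1}ᶜ {x : ℝ | t < min (|u * x| ^ 2) 1} ≤
      ENNReal.ofReal (C₀ * |u| ^ θ * t ^ (-θ / 2)) := by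
  rcases eq_or_ne u 0 with rfl | hu
  · simp [ht.le.not_gt]
  have hu : 0 < |u| := abs_pos.2 hu
  have hlevel : {x : ℝ | t < min (|u * x| ^ 2) 1} ⊆ {x : ℝ | √t / |u| ≤ |x|} := fun x hx => by
    have : √t < |u| * |x| := by
      rw [← abs_mul, ← Real.sqrt_sq (abs_nonneg (u * x))]
      exact Real.sqrt_lt_sqrt ht.le (hx.trans_le (min_le_left _ _))
    show √t / |u| ≤ |x|
    rw [div_le_iff₀ hu]
    linarith
  have hpow : (√t / |u|) ^ (-θ) = |u| ^ θ * t ^ (-θ / 2) := by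
    rw [Real.div_rpow (Real.sqrt_nonneg t) hu.le, Real.sqrt_eq_rpow, ← Real.rpow_mul ht.le,
      Real.rpow_neg hu.le, div_inv_eq_mul, mul_comm]
    ring_nf
  calc _ ≤ ν.restrict {x : ℝ | |x| ≤ 1}ᶜ {x : ℝ | √t / |u| ≤ |x|} := measure_mono hlevel
    _ ≤ _ := restrict_compl_unitBall_tail_le htail hθ hC₀ (by positivity)
    _ = _ := by rw [hpow, mul_assoc]

lemma setLIntegral_compl_unitBall_min_sq_le
    (htail : ∀ t : ℝ, 1 ≤ t → ν {x : ℝ | t ≤ |x|} ≤ ENNReal.ofReal (C₀ * t ^ (-θ)))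
    (hθ : 0 ≤ θ) (hθ2 : θ < 2) (hC₀ : 0 ≤ C₀) (u : ℝ) :
    ∫⁻ x in {x : ℝ | |x| ≤ 1}ᶜ, ENNReal.ofReal (min (|u * x| ^ 2) 1) ∂ν ≤
      ENNReal.ofReal (2 * C₀ / (2 - θ) * |u| ^ θ) := by
  set g : ℝ → ℝ≥0∞ := fun t => ENNReal.ofReal (C₀ * |u| ^ θ * t ^ (-θ / 2))
  have hlevel : ∀ t ∈ Ioi (0 : ℝ), ν.restrict {x : ℝ | |x| ≤ 1}ᶜ
      {x : ℝ | t < min (|u * x| ^ 2) 1} ≤ (Ioc 0 1).indicator g t := fun t ht => by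
    by_cases ht1 : t ≤ 1
    · rw [indicator_of_mem (show t ∈ Ioc 0 1 from ⟨ht, ht1⟩)]
      exact restrict_compl_unitBall_lt_min_sq_le htail hθ hC₀ u ht
    · have : {x : ℝ | t < min (|u * x| ^ 2) 1} = ∅ :=
        eq_empty_of_forall_notMem fun x hx => ht1 (hx.le.trans (min_le_right _ _))
      rw [this, measure_empty]
      exact zero_le
  calc ∫⁻ x in {x : ℝ | |x| ≤ 1}ᶜ, ENNReal.ofReal (min (|u * x| ^ 2) 1) ∂ν
      = ∫⁻ t in Ioi 0, ν.restrict {x : ℝ | |x| ≤ 1}ᶜ {x : ℝ | t < min (|u * x| ^ 2) 1} :=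
        lintegral_eq_lintegral_meas_lt _ (.of_forall fun x => by positivity)
          (by fun_prop : Measurable fun x : ℝ => min (|u * x| ^ 2) 1).aemeasurable
    _ ≤ ∫⁻ t in Ioi 0, (Ioc 0 1).indicator g t := setLIntegral_mono' measurableSet_Ioi hlevel
    _ = ENNReal.ofReal (C₀ * |u| ^ θ) * ∫⁻ t in Ioc (0 : ℝ) 1, ENNReal.ofReal (t ^ (-θ / 2)) := by
      rw [setLIntegral_indicator measurableSet_Ioc, inter_eq_left.2 Ioc_subset_Ioi_self,
        ← lintegral_const_mul _ (by fun_prop)]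
      refine setLIntegral_congr_fun measurableSet_Ioc fun t _ => ?_
      rw [← ENNReal.ofReal_mul (by positivity)]
    _ = ENNReal.ofReal (2 * C₀ / (2 - θ) * |u| ^ θ) := by
      rw [lintegral_Ioc_zero_one_ofReal_rpow (by linarith), ← ENNReal.ofReal_mul (by positivity)]
      congr 1
      field_simp
      ring

lemma lintegral_min_sq_le_of_abs_le_one
    (htail : ∀ t : ℝ, 1 ≤ t → ν {x : ℝ | t ≤ |x|} ≤ ENNReal.ofReal (C₀ * t ^ (-θ)))
    (hθ : 0 ≤ θ) (hθ2 : θ < 2) (hC₀ : 0 ≤ C₀) (hβ'0 : 0 ≤ β') (hβ'2 : β' ≤ 2)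
    (hβ'mom : ∫⁻ x in {x : ℝ | |x| ≤ 1}, ENNReal.ofReal (|x| ^ β') ∂ν < ⊤)
    {u : ℝ} (hu : |u| ≤ 1) :
    ∫⁻ x, ENNReal.ofReal (min (|u * x| ^ 2) 1) ∂ν ≤
      ENNReal.ofReal (((∫⁻ x in {x : ℝ | |x| ≤ 1}, ENNReal.ofReal (|x| ^ β') ∂ν).toReal +
        2 * C₀ / (2 - θ)) * |u| ^ θ) := by
  have hin : ∫⁻ x in {x : ℝ | |x| ≤ 1}, ENNReal.ofReal (min (|u * x| ^ 2) 1) ∂ν ≤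
      ENNReal.ofReal (|u| ^ θ) * ∫⁻ x in {x : ℝ | |x| ≤ 1}, ENNReal.ofReal (|x| ^ β') ∂ν :=
    setLIntegral_ofReal_le_ofReal_mul (by fun_prop) (by positivity) fun x (hx : |x| ≤ 1) => by
      rw [abs_mul]
      exact min_sq_one_le_rpow_mul_rpow (abs_nonneg u) hu (abs_nonneg x) hx hθ hθ2.le hβ'0 hβ'2
  rw [← lintegral_add_compl _ measurableSet_abs_le_one, add_mul,
    ENNReal.ofReal_add (by positivity) (by positivity), ENNReal.ofReal_mul ENNReal.toReal_nonneg,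
    ENNReal.ofReal_toReal hβ'mom.ne, mul_comm]
  exact add_le_add hin (setLIntegral_compl_unitBall_min_sq_le htail hθ hθ2 hC₀ u)

lemma lintegral_min_sq_le_of_one_lt_abs
    (htail : ∀ t : ℝ, 1 ≤ t → ν {x : ℝ | t ≤ |x|} ≤ ENNReal.ofReal (C₀ * t ^ (-θ)))
    (hC₀ : 0 ≤ C₀) (hβ'0 : 0 < β') (hβ'2 : β' ≤ 2)
    (hβ'mom : ∫⁻ x in {x : ℝ | |x| ≤ 1}, ENNReal.ofReal (|x| ^ β') ∂ν < ⊤)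
    {u : ℝ} (hu : 1 < |u|) :
    ∫⁻ x, ENNReal.ofReal (min (|u * x| ^ 2) 1) ∂ν ≤
      ENNReal.ofReal (((∫⁻ x in {x : ℝ | |x| ≤ 1}, ENNReal.ofReal (|x| ^ β') ∂ν).toReal +
        C₀) * |u| ^ β') := by
  have hin : ∫⁻ x in {x : ℝ | |x| ≤ 1}, ENNReal.ofReal (min (|u * x| ^ 2) 1) ∂ν ≤
      ENNReal.ofReal (|u| ^ β') * ∫⁻ x in {x : ℝ | |x| ≤ 1}, ENNReal.ofReal (|x| ^ β') ∂ν :=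
    setLIntegral_ofReal_le_ofReal_mul (by fun_prop) (by positivity) fun x _ => by
      rw [← Real.mul_rpow (abs_nonneg u) (abs_nonneg x), ← abs_mul]
      exact min_sq_one_le_rpow (abs_nonneg _) hβ'0 hβ'2
  have hout : ∫⁻ x in {x : ℝ | |x| ≤ 1}ᶜ, ENNReal.ofReal (min (|u * x| ^ 2) 1) ∂ν ≤
      ENNReal.ofReal (C₀ * |u| ^ β') :=
    calc ∫⁻ x in {x : ℝ | |x| ≤ 1}ᶜ, ENNReal.ofReal (min (|u * x| ^ 2) 1) ∂ν
        ≤ ∫⁻ _ in {x : ℝ | |x| ≤ 1}ᶜ, 1 ∂ν :=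
          lintegral_mono fun x => ENNReal.ofReal_le_one.2 (min_le_right _ _)
      _ = ν {x : ℝ | |x| ≤ 1}ᶜ := by rw [lintegral_one, Measure.restrict_apply_univ]
      _ ≤ ENNReal.ofReal C₀ := measure_compl_unitBall_le htail
      _ ≤ ENNReal.ofReal (C₀ * |u| ^ β') := ENNReal.ofReal_le_ofReal <|
          le_mul_of_one_le_right hC₀ (Real.one_le_rpow hu.le hβ'0.le)
  rw [← lintegral_add_compl _ measurableSet_abs_le_one, add_mul,
    ENNReal.ofReal_add (by positivity) (by positivity), ENNReal.ofReal_mul ENNReal.toReal_nonneg,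
    ENNReal.ofReal_toReal hβ'mom.ne, mul_comm]
  exact add_le_add hin hout

end PowerTail

theorem stmt_1_general
    (ν : Measure ℝ)
    (θ : ℝ) (hθ : 0 < θ) (hθ2 : θ < 2)
    (C₀ : ℝ) (hC₀ : 0 < C₀)
    (htail : ∀ t : ℝ, 1 ≤ t → ν {x : ℝ | t ≤ |x|} ≤ ENNReal.ofReal (C₀ * t ^ (-θ)))
    (β' : ℝ) (hβ'0 : 0 < β') (hβ'2 : β' ≤ 2)
    (hβ'mom : ∫⁻ x in {x : ℝ | |x| ≤ 1}, ENNReal.ofReal (|x| ^ β') ∂ν < ⊤) :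
    ∃ C > (0 : ℝ), ∀ u : ℝ,
      ∫⁻ x : ℝ, ENNReal.ofReal (min (|u * x| ^ 2) 1) ∂ν ≤
        ENNReal.ofReal (C * ((if |u| ≤ 1 then |u| ^ θ else 0) +
          (if 1 < |u| then |u| ^ β' else 0))) := by
  set M := (∫⁻ x in {x : ℝ | |x| ≤ 1}, ENNReal.ofReal (|x| ^ β') ∂ν).toReal
  have hK : 0 < 2 * C₀ / (2 - θ) := div_pos (by positivity) (by linarith)
  refine ⟨M + 2 * C₀ / (2 - θ) + C₀, by positivity, fun u => ?_⟩
  rcases le_or_gt |u| 1 with hu | hu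
  · rw [if_pos hu, if_neg hu.not_gt, add_zero]
    refine (lintegral_min_sq_le_of_abs_le_one htail hθ.le hθ2 hC₀.le hβ'0.le hβ'2 hβ'mom hu).trans
      (ENNReal.ofReal_le_ofReal (mul_le_mul_of_nonneg_right (by linarith) (by positivity)))
  · rw [if_neg hu.not_ge, if_pos hu, zero_add]
    refine (lintegral_min_sq_le_of_one_lt_abs htail hC₀.le hβ'0 hβ'2 hβ'mom hu).trans
      (ENNReal.ofReal_le_ofReal (mul_le_mul_of_nonneg_right (by linarith) (by positivity)))

/-- Equation (3.5): an estimate for `∫ min(|ux|², 1) ν(dx)` for a Lévy measure `ν`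
with a power tail bound and a `β'`-moment near the origin. -/
theorem stmt_1
    (ν : Measure ℝ)
    (hν0 : ν {0} = 0)
    (hν2 : ∫⁻ x : ℝ, ENNReal.ofReal (min 1 (x ^ 2)) ∂ν < ⊤)
    (θ : ℝ) (hθ : 0 < θ) (hθ2 : θ < 2)
    (C₀ : ℝ) (hC₀ : 0 < C₀)
    (htail : ∀ t : ℝ, 1 ≤ t → ν {x : ℝ | t ≤ |x|} ≤ ENNReal.ofReal (C₀ * t ^ (-θ)))
    (β' : ℝ) (hβ'0 : 0 < β') (hβ'2 : β' ≤ 2)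
    (hβ'mom : ∫⁻ x in {x : ℝ | |x| ≤ 1}, ENNReal.ofReal (|x| ^ β') ∂ν < ⊤) :
    ∃ C > (0 : ℝ), ∀ u : ℝ,
      ∫⁻ x : ℝ, ENNReal.ofReal (min (|u * x| ^ 2) 1) ∂ν ≤
        ENNReal.ofReal (C * ((if |u| ≤ 1 then |u| ^ θ else 0) +
          (if 1 < |u| then |u| ^ β' else 0))) :=
  stmt_1_general ν θ hθ hθ2 C₀ hC₀ htail β' hβ'0 hβ'2 hβ'mom
end

section
/- For every q ≥ 1 there exists a constant C > 0, depending only on q, such that for every Lévy measure ν, every m ∈ ℕ and all Borel measurable functions F¹, …, F^m : ℝ → ℝ one has ‖F¹ + ⋯ + F^m‖_{q,ν} ≤ C ( ‖F¹‖_{q,ν} + ⋯ + ‖F^m‖_{q,ν} ), where both sides take values in [0, ∞]. -/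
open MeasureTheory Set
open scoped ENNReal

noncomputable section

/-- `φ_q(x) = |x|^q · 1_{|x|>1} + x² · 1_{|x|≤1}`. -/
def phi (q x : ℝ) : ℝ := if |x| ≤ 1 then x ^ 2 else |x| ^ q

/-- `Φ_{q,ν}(F) = ∫_ℝ ∫_ℝ φ_q(F(s)·u) ds ν(du)`. -/
def PhiFun (q : ℝ) (ν : Measure ℝ) (F : ℝ → ℝ) : ℝ≥0∞ :=
  ∫⁻ u : ℝ, (∫⁻ s : ℝ, ENNReal.ofReal (phi q (F s * u))) ∂ν

/-- `‖F‖_{q,ν} = inf {λ > 0 : Φ_{q,ν}(F/λ) ≤ 1}`, with `inf ∅ = ∞`. -/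
def levyNorm (q : ℝ) (ν : Measure ℝ) (F : ℝ → ℝ) : ℝ≥0∞ :=
  sInf ((fun l : ℝ => ENNReal.ofReal l) ''
    {l : ℝ | 0 < l ∧ PhiFun q ν (fun s => F s / l) ≤ 1})

variable {q : ℝ}

lemma phi_nonneg (hq : 1 ≤ q) (x : ℝ) : 0 ≤ phi q x := by
  unfold phi; split
  · positivity
  · exact Real.rpow_nonneg (abs_nonneg x) q

lemma phi_abs (q x : ℝ) : phi q |x| = phi q x := by
  unfold phi; rw [abs_abs, sq_abs]

lemma phi_mono (hq : 1 ≤ q) {a b : ℝ} (ha : 0 ≤ a) (hab : a ≤ b) :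
    phi q a ≤ phi q b := by
  have hb : 0 ≤ b := ha.trans hab
  unfold phi
  rw [abs_of_nonneg ha, abs_of_nonneg hb]
  split <;> split
  · exact pow_le_pow_left₀ ha hab 2
  · next h1 h2 =>
    push_neg at h2
    calc a^2 ≤ 1 := by nlinarith
    _ ≤ b ^ q := Real.one_le_rpow h2.le (by linarith)
  · next h1 h2 => exact absurd (hab.trans h2) (by push_neg at h1; exact not_le.2 h1)
  · next h1 h2 =>
    push_neg at h1
    exact Real.rpow_le_rpow (by linarith) hab (by linarith)

lemma phi_scale (hq : 1 ≤ q) {μ : ℝ} (h0 : 0 ≤ μ) (h1 : μ ≤ 1) (x : ℝ) :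
    phi q (μ * x) ≤ μ * phi q x := by
  have hq0 : (0:ℝ) < q := by linarith
  unfold phi
  rw [abs_mul, abs_of_nonneg h0]
  rcases le_or_gt |x| 1 with hx | hx
  · rw [if_pos hx, if_pos (by nlinarith [abs_nonneg x])]
    nlinarith [sq_nonneg x, mul_nonneg (mul_nonneg h0 (sub_nonneg.2 h1)) (sq_nonneg x)]
  · rw [if_neg (not_le.2 hx)]
    split
    · next h =>
      -- μ|x| ≤ 1, |x| > 1 : (μx)² ≤ μ |x|^q
      have hxq : |x| ≤ |x| ^ q := by
        nth_rewrite 1 [← Real.rpow_one |x|]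
        exact Real.rpow_le_rpow_of_exponent_le hx.le hq
      have h2 : (μ*x)^2 = (μ*|x|) * (μ * |x|) := by
        rw [mul_pow, ← sq_abs x]; ring
      calc (μ*x)^2 = (μ*|x|) * (μ * |x|) := h2
        _ ≤ 1 * (μ * |x|) := by
            apply mul_le_mul_of_nonneg_right h (by positivity)
        _ = μ * |x| := one_mul _
        _ ≤ μ * |x| ^ q := mul_le_mul_of_nonneg_left hxq h0
    · next h =>
      push_neg at h
      have hμ : 0 < μ := by
        rcases h0.lt_or_eq with h' | h'
        · exact h'
        · exfalso; rw [← h'] at h; simp at h; linarith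
      rw [Real.mul_rpow h0 (abs_nonneg x)]
      have : μ ^ q ≤ μ := by
        nth_rewrite 2 [← Real.rpow_one μ]
        exact Real.rpow_le_rpow_of_exponent_ge hμ h1 hq
      exact mul_le_mul_of_nonneg_right this (Real.rpow_nonneg (abs_nonneg x) q)

lemma phi_double (hq : 1 ≤ q) {x : ℝ} (hx : 0 ≤ x) :
    phi q (2 * x) ≤ 2 ^ (q+1) * phi q x := by
  have hq0 : (0:ℝ) < q := by linarith
  have h4 : (4:ℝ) ≤ 2 ^ (q+1) := by
    calc (4:ℝ) = 2 ^ (2:ℝ) := by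
          rw [show (2:ℝ) = ((2:ℕ):ℝ) by norm_num, Real.rpow_natCast]; norm_num
      _ ≤ 2 ^ (q+1) := Real.rpow_le_rpow_of_exponent_le one_le_two (by linarith)
  unfold phi
  rw [abs_of_nonneg hx, abs_of_nonneg (by linarith : (0:ℝ) ≤ 2*x)]
  rcases le_or_gt (2*x) 1 with h2 | h2
  · rw [if_pos h2, if_pos (by linarith)]
    nlinarith [sq_nonneg x]
  · rw [if_neg (not_le.2 h2)]
    rcases le_or_gt x 1 with hx1 | hx1
    · rw [if_pos hx1]
      -- (2x)^q ≤ 2^(q+1) x², with 1/2 < x ≤ 1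
      have hxh : (1:ℝ)/2 < x := by linarith
      have : (2*x) ^ q ≤ (2:ℝ) ^ q * x ^ q := by
        rw [Real.mul_rpow (by norm_num) hx]
      calc (2*x)^q ≤ (2:ℝ)^q * x^q := this
        _ ≤ (2:ℝ)^q * (2 * x^2) := by
            apply mul_le_mul_of_nonneg_left _ (Real.rpow_nonneg (by norm_num) q)
            -- x^q ≤ 2 x² for 1/2 < x ≤ 1
            have hxpos : (0:ℝ) < x := by linarith
            rcases le_or_gt 2 q with hq2 | hq2
            · have h1 : x ^ q ≤ x ^ (2:ℝ) :=
                Real.rpow_le_rpow_of_exponent_ge hxpos hx1 hq2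
              have h2' : x ^ (2:ℝ) = x ^ 2 := by
                rw [show (2:ℝ) = ((2:ℕ):ℝ) by norm_num, Real.rpow_natCast]
              rw [h2'] at h1
              nlinarith [sq_nonneg x]
            · 
              have hxinv : x⁻¹ ≤ 2 := by
                rw [← one_div]
                rw [div_le_iff₀ hxpos]; linarith
              have key : x ^ (q-2) ≤ 2 := by
                calc x^(q-2) = x⁻¹ ^ (2-q) := by
                      rw [Real.inv_rpow hxpos.le, ← Real.rpow_neg hxpos.le]; ring_nf
                  _ ≤ 2 ^ (2-q) := Real.rpow_le_rpow (by positivity) hxinv (by linarith)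
                  _ ≤ 2 ^ (1:ℝ) := Real.rpow_le_rpow_of_exponent_le one_le_two (by linarith)
                  _ = 2 := Real.rpow_one 2
              have hsplit : x ^ q = x^2 * x^(q-2) := by
                rw [← Real.rpow_natCast x 2, ← Real.rpow_add hxpos]; norm_num
              rw [hsplit]
              nlinarith [sq_nonneg x, mul_le_mul_of_nonneg_left key (sq_nonneg x)]
        _ = (2:ℝ)^q * 2 * x^2 := by ring
        _ = 2 ^ (q+1) * x^2 := by rw [Real.rpow_add (by norm_num), Real.rpow_one]
    · rw [if_neg (not_le.2 hx1), Real.mul_rpow (by norm_num) hx]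
      have : (2:ℝ)^q ≤ 2^(q+1) := Real.rpow_le_rpow_of_exponent_le one_le_two (by linarith)
      exact mul_le_mul_of_nonneg_right this (Real.rpow_nonneg hx q)

lemma phi_sum_le (hq : 1 ≤ q) {m : ℕ} (t y : Fin m → ℝ) (ht : ∀ i, 0 ≤ t i)
    (hts : ∑ i, t i = 1) :
    phi q (∑ i, t i * y i) ≤ 2 ^ (q + 2) * ∑ i, t i * phi q (y i) := by
  have hq0 : (0:ℝ) < q := by linarith
  set a : Fin m → ℝ := fun i => if |y i| ≤ 1 then |y i| else 0 with ha
  set b : Fin m → ℝ := fun i => if |y i| ≤ 1 then 0 else |y i| with hb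
  have ha0 : ∀ i, 0 ≤ a i := fun i => by
    simp only [ha]; split <;> simp [abs_nonneg]
  have hb0 : ∀ i, 0 ≤ b i := fun i => by
    simp only [hb]; split <;> simp [abs_nonneg]
  have hab : ∀ i, a i + b i = |y i| := fun i => by
    simp only [ha, hb]; split <;> ring
  set A : ℝ := ∑ i, t i * a i with hA
  set B : ℝ := ∑ i, t i * b i with hB
  have hA0 : 0 ≤ A := Finset.sum_nonneg fun i _ => mul_nonneg (ht i) (ha0 i)
  have hB0 : 0 ≤ B := Finset.sum_nonneg fun i _ => mul_nonneg (ht i) (hb0 i)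
  have habs : |∑ i, t i * y i| ≤ A + B := by
    calc |∑ i, t i * y i| ≤ ∑ i, |t i * y i| := Finset.abs_sum_le_sum_abs _ _
      _ = ∑ i, t i * |y i| := by
          apply Finset.sum_congr rfl; intro i _
          rw [abs_mul, abs_of_nonneg (ht i)]
      _ = A + B := by
          rw [hA, hB, ← Finset.sum_add_distrib]
          apply Finset.sum_congr rfl; intro i _
          rw [← hab i]; ring
  have hSigma0 : 0 ≤ ∑ i, t i * phi q (y i) :=
    Finset.sum_nonneg fun i _ => mul_nonneg (ht i) (phi_nonneg hq _)
  -- phi A ≤ Σ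
  have hSA : phi q A ≤ ∑ i, t i * phi q (y i) := by
    have hA1 : A ≤ 1 := by
      rw [hA, ← hts]
      apply Finset.sum_le_sum; intro i _
      nth_rewrite 2 [← mul_one (t i)]
      apply mul_le_mul_of_nonneg_left _ (ht i)
      simp only [ha]; split <;> simp_all
    have h1 : phi q A = A ^ 2 := by
      unfold phi; rw [if_pos (by rw [abs_of_nonneg hA0]; exact hA1)]
    rw [h1, hA]
    calc (∑ i, t i * a i) ^ 2 ≤ ∑ i, t i * a i ^ 2 :=
        Real.pow_arith_mean_le_arith_mean_pow _ _ _ (fun i _ => ht i) hts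
          (fun i _ => ha0 i) 2
      _ ≤ ∑ i, t i * phi q (y i) := by
          apply Finset.sum_le_sum; intro i _
          apply mul_le_mul_of_nonneg_left _ (ht i)
          simp only [ha]; split
          · next h => unfold phi; rw [if_pos h, sq_abs]
          · simpa using phi_nonneg hq (y i)
  -- phi B ≤ Σ
  have hbb : ∀ i, b i ≤ b i ^ q := by
    intro i
    simp only [hb]; split
    · simp [Real.zero_rpow (ne_of_gt hq0)]
    · next h =>
      push_neg at h
      nth_rewrite 1 [← Real.rpow_one |y i|]
      exact Real.rpow_le_rpow_of_exponent_le h.le hq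
  have hbphi : ∀ i, b i ^ q ≤ phi q (y i) := by
    intro i
    simp only [hb]; split
    · next h =>
      rw [Real.zero_rpow (ne_of_gt hq0)]
      exact phi_nonneg hq _
    · next h => unfold phi; rw [if_neg h]
  have hSB : phi q B ≤ ∑ i, t i * phi q (y i) := by
    rcases le_or_gt B 1 with h1 | h1
    · have h2 : phi q B = B ^ 2 := by
        unfold phi; rw [if_pos (by rw [abs_of_nonneg hB0]; exact h1)]
      rw [h2]
      calc B ^ 2 ≤ B := by nlinarith
        _ = ∑ i, t i * b i := hB
        _ ≤ ∑ i, t i * phi q (y i) := by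
            apply Finset.sum_le_sum; intro i _
            exact mul_le_mul_of_nonneg_left ((hbb i).trans (hbphi i)) (ht i)
    · have h2 : phi q B = B ^ q := by
        unfold phi; rw [abs_of_nonneg hB0, if_neg (not_le.2 h1)]
      rw [h2, hB]
      calc (∑ i, t i * b i) ^ q ≤ ∑ i, t i * b i ^ q :=
          Real.rpow_arith_mean_le_arith_mean_rpow _ _ _ (fun i _ => ht i) hts
            (fun i _ => hb0 i) hq
        _ ≤ ∑ i, t i * phi q (y i) := by
            apply Finset.sum_le_sum; intro i _
            exact mul_le_mul_of_nonneg_left (hbphi i) (ht i)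
  -- assemble
  have hmono : phi q (∑ i, t i * y i) ≤ phi q (A + B) := by
    rw [← phi_abs q (∑ i, t i * y i)]
    exact phi_mono hq (abs_nonneg _) habs
  have hD : phi q (A + B) ≤ 2 ^ (q+1) * (phi q A + phi q B) := by
    have hpow : (0:ℝ) ≤ 2 ^ (q+1) := Real.rpow_nonneg (by norm_num) _
    rcases le_total A B with h | h
    · calc phi q (A + B) ≤ phi q (2 * B) :=
          phi_mono hq (by linarith) (by linarith)
        _ ≤ 2 ^ (q+1) * phi q B := phi_double hq hB0
        _ ≤ 2 ^ (q+1) * (phi q A + phi q B) := by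
            nlinarith [phi_nonneg hq A]
    · calc phi q (A + B) ≤ phi q (2 * A) :=
          phi_mono hq (by linarith) (by linarith)
        _ ≤ 2 ^ (q+1) * phi q A := phi_double hq hA0
        _ ≤ 2 ^ (q+1) * (phi q A + phi q B) := by
            nlinarith [phi_nonneg hq B]
  have hfin : (2:ℝ) ^ (q+2) = 2 ^ (q+1) * 2 := by
    rw [show q + 2 = (q+1) + 1 by ring, Real.rpow_add (by norm_num : (0:ℝ) < 2),
      Real.rpow_one]
  calc phi q (∑ i, t i * y i) ≤ 2 ^ (q+1) * (phi q A + phi q B) := hmono.trans hD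
    _ ≤ 2 ^ (q+1) * (2 * ∑ i, t i * phi q (y i)) := by
        have hpow : (0:ℝ) ≤ 2 ^ (q+1) := Real.rpow_nonneg (by norm_num) _
        apply mul_le_mul_of_nonneg_left _ hpow
        linarith
    _ = 2 ^ (q+2) * ∑ i, t i * phi q (y i) := by rw [hfin]; ring

lemma measurable_phi (hq : 1 ≤ q) : Measurable (phi q) := by
  unfold phi
  apply Measurable.ite (measurableSet_le (measurable_abs) measurable_const)
  · exact (measurable_id.pow_const 2)
  · exact ((continuous_abs).rpow_const (fun x => Or.inr (by linarith))).measurable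

lemma levyNorm_le {ν : Measure ℝ} {F : ℝ → ℝ} {l : ℝ} (hl : 0 < l)
    (h : PhiFun q ν (fun s => F s / l) ≤ 1) :
    levyNorm q ν F ≤ ENNReal.ofReal l :=
  sInf_le ⟨l, ⟨hl, h⟩, rfl⟩

lemma levyNorm_lt {ν : Measure ℝ} {F : ℝ → ℝ} {c : ℝ}
    (h : levyNorm q ν F < ENNReal.ofReal c) :
    ∃ l : ℝ, 0 < l ∧ l < c ∧ PhiFun q ν (fun s => F s / l) ≤ 1 := by
  obtain ⟨x, hx, hlt⟩ := sInf_lt_iff.1 h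
  obtain ⟨l, ⟨hl0, hΦ⟩, rfl⟩ := hx
  refine ⟨l, hl0, ?_, hΦ⟩
  by_contra h'
  push_neg at h'
  exact absurd hlt (not_lt.2 (ENNReal.ofReal_le_ofReal h'))

lemma PhiFun_scale (hq : 1 ≤ q) (ν : Measure ℝ) (G : ℝ → ℝ) {c : ℝ} (hc : 1 ≤ c) :
    PhiFun q ν (fun s => G s / c) ≤ ENNReal.ofReal c⁻¹ * PhiFun q ν G := by
  have hc0 : (0:ℝ) < c := by linarith
  unfold PhiFun
  rw [← lintegral_const_mul' _ _ ENNReal.ofReal_ne_top]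
  apply lintegral_mono; intro u
  dsimp only
  rw [← lintegral_const_mul' _ _ ENNReal.ofReal_ne_top]
  apply lintegral_mono; intro s
  dsimp only
  rw [← ENNReal.ofReal_mul (by positivity)]
  apply ENNReal.ofReal_le_ofReal
  have h1 : G s / c * u = c⁻¹ * (G s * u) := by
    rw [div_eq_mul_inv]; ring
  rw [h1]
  exact phi_scale hq (by positivity) (inv_le_one_of_one_le₀ hc) _

lemma PhiFun_combo (hq : 1 ≤ q) (ν : Measure ℝ) {m : ℕ} (hm : m ≠ 0)
    (F : Fin m → ℝ → ℝ) (hF : ∀ i, Measurable (F i))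
    (l : Fin m → ℝ) (hl : ∀ i, 0 < l i)
    (hΦ : ∀ i, PhiFun q ν (fun s => F i s / l i) ≤ 1) :
    PhiFun q ν (fun s => (∑ i, F i s) / (2 ^ (q+2) * ∑ i, l i)) ≤ 1 := by
  have hq0 : (0:ℝ) < q := by linarith
  set K : ℝ := 2 ^ (q+2) with hKdef
  have hK1 : (1:ℝ) ≤ K := Real.one_le_rpow one_le_two (by linarith)
  have hK0 : (0:ℝ) < K := by linarith
  set L : ℝ := ∑ i, l i with hLdef
  have hL0 : (0:ℝ) < L := by
    apply Finset.sum_pos (fun i _ => hl i)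
    have : Nonempty (Fin m) := Fin.pos_iff_nonempty.1 (Nat.pos_of_ne_zero hm)
    exact Finset.univ_nonempty
  have hts : ∑ i, l i / L = 1 := by
    rw [← Finset.sum_div, ← hLdef, div_self (ne_of_gt hL0)]
  -- pointwise bound
  have hpt : ∀ s u : ℝ, phi q ((∑ i, F i s) / L * u) ≤ K * ∑ i, (l i / L) * phi q (F i s / l i * u) := by
    intro s u
    have hrw : (∑ i, F i s) / L * u = ∑ i, (l i / L) * (F i s / l i * u) := by
      rw [Finset.sum_div, Finset.sum_mul]
      apply Finset.sum_congr rfl; intro i _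
      have h1 : l i ≠ 0 := (hl i).ne'
      have h2 : L ≠ 0 := hL0.ne'
      field_simp
    rw [hrw]
    exact phi_sum_le hq _ _ (fun i => div_nonneg (hl i).le hL0.le) hts
  -- measurability pieces
  have hmeas : ∀ i : Fin m, Measurable (Function.uncurry fun u s : ℝ =>
      ENNReal.ofReal (phi q (F i s / l i * u))) := by
    intro i
    have : Measurable (fun p : ℝ × ℝ => ENNReal.ofReal (phi q (F i p.2 / l i * p.1))) := by
      apply ENNReal.measurable_ofReal.comp
      apply (measurable_phi hq).comp
      exact (((hF i).comp measurable_snd).div_const (l i)).mul measurable_fst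
    exact this
  -- inner bound and integration
  have step2 : PhiFun q ν (fun s => (∑ i, F i s) / L) ≤
      ENNReal.ofReal K * ∑ i, ENNReal.ofReal (l i / L) *
        PhiFun q ν (fun s => F i s / l i) := by
    unfold PhiFun
    have hb : ∀ u : ℝ, (∫⁻ s, ENNReal.ofReal (phi q ((∑ i, F i s) / L * u))) ≤
        ENNReal.ofReal K * ∑ i, ENNReal.ofReal (l i / L) *
          ∫⁻ s, ENNReal.ofReal (phi q (F i s / l i * u)) := by
      intro u
      have hptE : ∀ s : ℝ, ENNReal.ofReal (phi q ((∑ i, F i s) / L * u)) ≤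
          ENNReal.ofReal K * ∑ i, ENNReal.ofReal (l i / L) *
            ENNReal.ofReal (phi q (F i s / l i * u)) := by
        intro s
        calc ENNReal.ofReal (phi q ((∑ i, F i s) / L * u))
            ≤ ENNReal.ofReal (K * ∑ i, (l i / L) * phi q (F i s / l i * u)) :=
              ENNReal.ofReal_le_ofReal (hpt s u)
          _ = ENNReal.ofReal K * ENNReal.ofReal (∑ i, (l i / L) * phi q (F i s / l i * u)) :=
              ENNReal.ofReal_mul hK0.le
          _ = ENNReal.ofReal K * ∑ i, ENNReal.ofReal ((l i / L) * phi q (F i s / l i * u)) := by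
              rw [ENNReal.ofReal_sum_of_nonneg]
              intro i _
              exact mul_nonneg (div_nonneg (hl i).le hL0.le) (phi_nonneg hq _)
          _ = ENNReal.ofReal K * ∑ i, ENNReal.ofReal (l i / L) *
                ENNReal.ofReal (phi q (F i s / l i * u)) := by
              congr 1
              apply Finset.sum_congr rfl; intro i _
              exact ENNReal.ofReal_mul (div_nonneg (hl i).le hL0.le)
      calc (∫⁻ s, ENNReal.ofReal (phi q ((∑ i, F i s) / L * u)))
          ≤ ∫⁻ s, ENNReal.ofReal K * ∑ i, ENNReal.ofReal (l i / L) *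
              ENNReal.ofReal (phi q (F i s / l i * u)) := lintegral_mono hptE
        _ = ENNReal.ofReal K * ∫⁻ s, ∑ i, ENNReal.ofReal (l i / L) *
              ENNReal.ofReal (phi q (F i s / l i * u)) :=
            lintegral_const_mul' _ _ ENNReal.ofReal_ne_top
        _ = ENNReal.ofReal K * ∑ i, ∫⁻ s, ENNReal.ofReal (l i / L) *
              ENNReal.ofReal (phi q (F i s / l i * u)) := by
            congr 1
            apply lintegral_finset_sum
            intro i _
            exact (measurable_const.mul ((hmeas i).comp (measurable_const.prodMk measurable_id)))
        _ = ENNReal.ofReal K * ∑ i, ENNReal.ofReal (l i / L) *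
              ∫⁻ s, ENNReal.ofReal (phi q (F i s / l i * u)) := by
            congr 1
            apply Finset.sum_congr rfl; intro i _
            exact lintegral_const_mul' _ _ ENNReal.ofReal_ne_top
    calc (∫⁻ u, (∫⁻ s, ENNReal.ofReal (phi q ((∑ i, F i s) / L * u))) ∂ν)
        ≤ ∫⁻ u, (ENNReal.ofReal K * ∑ i, ENNReal.ofReal (l i / L) *
            ∫⁻ s, ENNReal.ofReal (phi q (F i s / l i * u))) ∂ν := lintegral_mono hb
      _ = ENNReal.ofReal K * ∫⁻ u, (∑ i, ENNReal.ofReal (l i / L) *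
            ∫⁻ s, ENNReal.ofReal (phi q (F i s / l i * u))) ∂ν :=
          lintegral_const_mul' _ _ ENNReal.ofReal_ne_top
      _ = ENNReal.ofReal K * ∑ i, ∫⁻ u, (ENNReal.ofReal (l i / L) *
            ∫⁻ s, ENNReal.ofReal (phi q (F i s / l i * u))) ∂ν := by
          congr 1
          apply lintegral_finset_sum
          intro i _
          exact measurable_const.mul ((hmeas i).lintegral_prod_right)
      _ = ENNReal.ofReal K * ∑ i, ENNReal.ofReal (l i / L) *
            ∫⁻ u, (∫⁻ s, ENNReal.ofReal (phi q (F i s / l i * u))) ∂ν := by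
          congr 1
          apply Finset.sum_congr rfl; intro i _
          exact lintegral_const_mul' _ _ ENNReal.ofReal_ne_top
  -- combine with scaling
  have heq : (fun s => (∑ i, F i s) / (K * L)) = (fun s => ((∑ i, F i s) / L) / K) := by
    funext s; rw [div_div]; ring_nf
  calc PhiFun q ν (fun s => (∑ i, F i s) / (K * L))
      = PhiFun q ν (fun s => ((∑ i, F i s) / L) / K) := by rw [heq]
    _ ≤ ENNReal.ofReal K⁻¹ * PhiFun q ν (fun s => (∑ i, F i s) / L) :=
        PhiFun_scale hq ν _ hK1
    _ ≤ ENNReal.ofReal K⁻¹ * (ENNReal.ofReal K * ∑ i, ENNReal.ofReal (l i / L) *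
          PhiFun q ν (fun s => F i s / l i)) := by
        exact mul_le_mul_right step2 _
    _ ≤ ENNReal.ofReal K⁻¹ * (ENNReal.ofReal K * ∑ i, ENNReal.ofReal (l i / L) * 1) := by
        apply mul_le_mul_right
        apply mul_le_mul_right
        exact Finset.sum_le_sum fun i _ => mul_le_mul_right (hΦ i) _
    _ = 1 := by
        simp only [mul_one]
        rw [← ENNReal.ofReal_sum_of_nonneg (fun i _ => div_nonneg (hl i).le hL0.le), hts,
          ENNReal.ofReal_one, mul_one, ← ENNReal.ofReal_mul (by positivity),
          inv_mul_cancel₀ (ne_of_gt hK0), ENNReal.ofReal_one]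


/-- Remark 3.4 (ii): the quasi-triangle inequality for `‖·‖_{q,ν}`. -/
theorem stmt_2 :
    ∀ q : ℝ, 1 ≤ q → ∃ C > (0 : ℝ),
      ∀ ν : Measure ℝ, ν {0} = 0 →
        (∫⁻ x : ℝ, ENNReal.ofReal (min 1 (x ^ 2)) ∂ν) < ⊤ →
        ∀ m : ℕ, ∀ F : Fin m → ℝ → ℝ, (∀ i, Measurable (F i)) →
          levyNorm q ν (fun s => ∑ i : Fin m, F i s) ≤
            ENNReal.ofReal C * ∑ i : Fin m, levyNorm q ν (F i) := by
  intro q hq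
  have hC0 : (0:ℝ) < 2 ^ (q+2) := Real.rpow_pos_of_pos two_pos _
  refine ⟨2 ^ (q+2), hC0, ?_⟩
  intro ν hν0 hνfin m F hF
  set C : ℝ := 2 ^ (q+2) with hCdef
  rcases Nat.eq_zero_or_pos m with hm | hm
  · subst hm
    simp only [Finset.univ_eq_empty, Finset.sum_empty, mul_zero]
    apply ENNReal.le_of_forall_pos_le_add
    intro ε hε _
    rw [zero_add]
    have hε' : (0:ℝ) < (ε:ℝ) := hε
    have h0 : PhiFun q ν (fun _ : ℝ => (0:ℝ) / (ε:ℝ)) ≤ 1 := by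
      unfold PhiFun
      have hphi : ∀ u : ℝ, phi q ((0:ℝ)/(ε:ℝ) * u) = 0 := by
        intro u; rw [zero_div, zero_mul]; unfold phi
        rw [abs_zero, if_pos zero_le_one]; ring
      simp only [hphi, ENNReal.ofReal_zero, lintegral_zero, lintegral_const,
        zero_mul]
      exact zero_le_one
    calc levyNorm q ν (fun _ => (0:ℝ)) ≤ ENNReal.ofReal (ε:ℝ) :=
        levyNorm_le hε' h0
      _ = (ε : ℝ≥0∞) := ENNReal.ofReal_coe_nnreal
  · have hm' : m ≠ 0 := hm.ne'
    by_cases htop : ∑ i, levyNorm q ν (F i) = ⊤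
    · rw [htop, ENNReal.mul_top (by simp only [ne_eq, ENNReal.ofReal_eq_zero, not_le]; exact hC0)]
      exact le_top
    · have hfin : ∀ i, levyNorm q ν (F i) ≠ ⊤ := by
        intro i h
        exact htop (ENNReal.sum_eq_top.2 ⟨i, Finset.mem_univ i, h⟩)
      apply ENNReal.le_of_forall_pos_le_add
      intro ε hε _
      have hε' : (0:ℝ) < (ε:ℝ) := hε
      have hCm1 : (0:ℝ) < C * m + 1 := by
        have : (0:ℝ) ≤ (m:ℝ) := Nat.cast_nonneg m
        nlinarith
      set δ : ℝ := (ε:ℝ) / (C * m + 1) with hδdef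
      have hδ0 : 0 < δ := div_pos hε' hCm1
      have hlt : ∀ i, levyNorm q ν (F i) <
          ENNReal.ofReal ((levyNorm q ν (F i)).toReal + δ) := by
        intro i
        rw [ENNReal.lt_ofReal_iff_toReal_lt (hfin i)]
        linarith
      choose l hl0 hlless hlΦ using fun i => levyNorm_lt (hlt i)
      set L : ℝ := ∑ i, l i with hLdef
      have hL0 : (0:ℝ) < L := by
        apply Finset.sum_pos (fun i _ => hl0 i)
        have : Nonempty (Fin m) := Fin.pos_iff_nonempty.1 hm
        exact Finset.univ_nonempty
      have key := PhiFun_combo hq ν hm' F hF l hl0 hlΦ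
      have h1 : levyNorm q ν (fun s => ∑ i, F i s) ≤ ENNReal.ofReal (C * L) :=
        levyNorm_le (mul_pos hC0 hL0) key
      set S : ℝ := ∑ i, (levyNorm q ν (F i)).toReal with hSdef
      have hS0 : 0 ≤ S :=
        Finset.sum_nonneg fun i _ => ENNReal.toReal_nonneg
      have hLS : L ≤ S + m * δ := by
        calc L ≤ ∑ i : Fin m, ((levyNorm q ν (F i)).toReal + δ) :=
            Finset.sum_le_sum (fun i _ => (hlless i).le)
          _ = S + m * δ := by
              rw [Finset.sum_add_distrib, Finset.sum_const, Finset.card_univ,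
                Fintype.card_fin, nsmul_eq_mul]
      have hofS : ENNReal.ofReal S = ∑ i, levyNorm q ν (F i) := by
        rw [hSdef, ENNReal.ofReal_sum_of_nonneg (fun i _ => ENNReal.toReal_nonneg)]
        exact Finset.sum_congr rfl fun i _ => ENNReal.ofReal_toReal (hfin i)
      have h2 : C * (m * δ) ≤ (ε:ℝ) := by
        have heq : C * (m * δ) = (C * m) * (ε:ℝ) / (C*m+1) := by
          rw [hδdef]; ring
        rw [heq, div_le_iff₀ hCm1]
        have : (0:ℝ) ≤ (m:ℝ) := Nat.cast_nonneg m
        nlinarith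
      calc levyNorm q ν (fun s => ∑ i, F i s) ≤ ENNReal.ofReal (C * L) := h1
        _ ≤ ENNReal.ofReal (C * S + C * (m * δ)) := by
            apply ENNReal.ofReal_le_ofReal
            nlinarith
        _ ≤ ENNReal.ofReal (C * S) + ENNReal.ofReal (C * (m * δ)) :=
            ENNReal.ofReal_add_le
        _ ≤ ENNReal.ofReal C * ∑ i, levyNorm q ν (F i) + (ε : ℝ≥0∞) := by
            apply add_le_add
            · rw [ENNReal.ofReal_mul hC0.le, hofS]
            · calc ENNReal.ofReal (C * (m * δ)) ≤ ENNReal.ofReal (ε:ℝ) :=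
                  ENNReal.ofReal_le_ofReal h2
                _ = (ε : ℝ≥0∞) := ENNReal.ofReal_coe_nnreal

end
end

section
/- Let a ∈ (0, 1], θ ∈ (0, 2], C₀ > 0 and let μ be a finite Borel measure on (0, ∞) with μ((0, a)) = 0 and μ([t, ∞)) ≤ C₀ t^{−θ} for all t ≥ a. Let ρ ∈ (0, 1] satisfy ρ ≤ θ, and additionally ρ < 1 in case θ = 1. Then there exists C > 0 such that for all u ∈ ℝ: ∫_{(0,∞)} |τ(u x)| μ(dx) ≤ C ( |u|^ρ · 1_{|u|≤1} + 1_{|u|>1} ). -/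
/-!
Since `|τ y| ≤ min |y| 1`, for `0 < |u| ≤ 1` the integral is at most `|u| ∫ min x R dμ` with
`R = |u|⁻¹`. By the layer-cake formula and the tail bound,
`∫ min x R dμ ≤ ∫_0^R μ [s, ∞) ds ≤ C₀ ∫_0^R max(a, s)^(-θ) ds`, and this is `O(R^(1-ρ))`:
for `ρ < 1` because `max(a, s)^(-θ) ≤ a^(ρ-θ) s^(-ρ)`, and for `ρ = 1 < θ` because the integral
over `(0, ∞)` converges. For `|u| > 1` the integral is at most `μ ℝ`.
-/

open MeasureTheory Set
open scoped ENNReal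

noncomputable section

/-- The truncation function `τ(x) = x·1_{|x|<1} + sign(x)·1_{|x|≥1}`. -/
def tauTrunc (x : ℝ) : ℝ := if |x| < 1 then x else Real.sign x

lemma abs_tauTrunc_le_min (y : ℝ) : |tauTrunc y| ≤ min |y| 1 := by
  unfold tauTrunc
  split_ifs with h
  · exact le_min le_rfl h.le
  · rcases Real.sign_apply_eq y with h1 | h1 | h1 <;> simp [h1] <;> linarith

lemma setLIntegral_abs_tauTrunc_le_measure (μ : Measure ℝ) (s : Set ℝ) (f : ℝ → ℝ) :
    ∫⁻ x in s, ENNReal.ofReal |tauTrunc (f x)| ∂μ ≤ μ s :=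
  calc ∫⁻ x in s, ENNReal.ofReal |tauTrunc (f x)| ∂μ ≤ ∫⁻ _ in s, 1 ∂μ :=
        lintegral_mono fun _ =>
          ENNReal.ofReal_le_one.mpr ((abs_tauTrunc_le_min _).trans (min_le_right _ _))
    _ = μ s := setLIntegral_one s

lemma lintegral_ofReal_min_le_lintegral_measure_Ici (ν : Measure ℝ) (hν : ∀ᵐ x ∂ν, 0 ≤ x)
    {R : ℝ} (hR : 0 ≤ R) : ∫⁻ x, ENNReal.ofReal (min x R) ∂ν ≤ ∫⁻ s in Ioc 0 R, ν (Ici s) := by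
  have hnn : 0 ≤ᵐ[ν] fun x => min x R := by
    filter_upwards [hν] with x hx using le_min hx hR
  rw [lintegral_eq_lintegral_meas_le ν hnn (by fun_prop)]
  calc ∫⁻ t in Ioi 0, ν {x | t ≤ min x R}
      ≤ ∫⁻ t in Ioi 0, (Ioc 0 R).indicator (fun s => ν (Ici s)) t := by
        refine setLIntegral_mono' measurableSet_Ioi fun t (ht : 0 < t) => ?_
        by_cases htR : t ≤ R
        · rw [indicator_of_mem (show t ∈ Ioc 0 R from ⟨ht, htR⟩)]
          exact measure_mono fun x (hx : t ≤ min x R) => mem_Ici.mpr (le_min_iff.mp hx).1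
        · have hempty : {x | t ≤ min x R} = ∅ :=
            eq_empty_of_forall_notMem fun x hx => htR ((le_min_iff.mp hx).2)
          rw [hempty, measure_empty]
          exact zero_le
    _ = ∫⁻ s in Ioc 0 R, ν (Ici s) := by
        rw [lintegral_indicator measurableSet_Ioc, Measure.restrict_restrict measurableSet_Ioc,
          inter_eq_left.mpr Ioc_subset_Ioi_self]

lemma measure_restrict_Ioi_Ici_le {a θ C₀ : ℝ} {μ : Measure ℝ} (hsmall : μ (Ioo 0 a) = 0)
    (htail : ∀ t : ℝ, a ≤ t → μ (Ici t) ≤ ENNReal.ofReal (C₀ * t ^ (-θ))) (s : ℝ) :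
    μ.restrict (Ioi 0) (Ici s) ≤ ENNReal.ofReal (C₀ * max a s ^ (-θ)) := by
  have hsub : Ici s ∩ Ioi 0 ⊆ Ioo 0 a ∪ Ici (max a s) := by
    rintro x ⟨hxs, hx0⟩
    rcases lt_or_ge x a with hxa | hxa
    · exact Or.inl ⟨hx0, hxa⟩
    · exact Or.inr (max_le hxa hxs)
  calc μ.restrict (Ioi 0) (Ici s) = μ (Ici s ∩ Ioi 0) := Measure.restrict_apply measurableSet_Ici
    _ ≤ μ (Ioo 0 a) + μ (Ici (max a s)) := (measure_mono hsub).trans (measure_union_le _ _)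
    _ ≤ ENNReal.ofReal (C₀ * max a s ^ (-θ)) := by
      rw [hsmall, zero_add]
      exact htail _ (le_max_left _ _)

lemma max_rpow_neg_le_rpow_sub_mul_rpow_neg {a θ ρ s : ℝ} (ha : 0 < a) (hρ0 : 0 ≤ ρ)
    (hρθ : ρ ≤ θ) (hs : 0 < s) :
    max a s ^ (-θ) ≤ a ^ (ρ - θ) * s ^ (-ρ) := by
  have hM : 0 < max a s := ha.trans_le (le_max_left _ _)
  calc max a s ^ (-θ) = max a s ^ (ρ - θ) * max a s ^ (-ρ) := by
        rw [← Real.rpow_add hM]; ring_nf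
    _ ≤ a ^ (ρ - θ) * s ^ (-ρ) :=
      mul_le_mul (Real.rpow_le_rpow_of_nonpos ha (le_max_left _ _) (by linarith))
        (Real.rpow_le_rpow_of_nonpos hs (le_max_right _ _) (by linarith)) (by positivity)
        (by positivity)

lemma lintegral_Ioc_rpow_neg {ρ : ℝ} (hρ1 : ρ < 1) {R : ℝ} (hR : 0 ≤ R) :
    ∫⁻ s in Ioc 0 R, ENNReal.ofReal (s ^ (-ρ)) = ENNReal.ofReal (R ^ (1 - ρ) / (1 - ρ)) := by
  have hint : IntegrableOn (fun s : ℝ => s ^ (-ρ)) (Ioc 0 R) :=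
    (intervalIntegrable_iff_integrableOn_Ioc_of_le hR).mp
      (intervalIntegral.intervalIntegrable_rpow' (by linarith))
  have hnn : 0 ≤ᵐ[volume.restrict (Ioc 0 R)] fun s : ℝ => s ^ (-ρ) :=
    (ae_restrict_iff' measurableSet_Ioc).mpr (.of_forall fun s hs => Real.rpow_nonneg hs.1.le _)
  rw [← ofReal_integral_eq_lintegral_ofReal hint hnn, ← intervalIntegral.integral_of_le hR,
    integral_rpow (Or.inl (by linarith)), Real.zero_rpow (by linarith)]
  ring_nf

lemma integrableOn_Ioi_max_rpow_neg {a θ : ℝ} (ha : 0 < a) (hθ : 1 < θ) :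
    IntegrableOn (fun s : ℝ => max a s ^ (-θ)) (Ioi 0) := by
  have hcont : Continuous fun s : ℝ => max a s ^ (-θ) :=
    (continuous_const.max continuous_id).rpow_const fun s =>
      Or.inl (ha.trans_le (le_max_left _ _)).ne'
  rw [← Ioc_union_Ioi_eq_Ioi ha.le]
  refine (hcont.integrableOn_Icc.mono_set Ioc_subset_Icc_self).union ?_
  refine (integrableOn_Ioi_rpow_of_lt (a := -θ) (by linarith) ha).congr_fun
    (fun s (hs : a < s) => by rw [max_eq_right hs.le]) measurableSet_Ioi

lemma exists_lintegral_Ioc_max_rpow_neg_le {a θ ρ : ℝ} (ha : 0 < a) (hρ0 : 0 < ρ) (hρ1 : ρ ≤ 1)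
    (hρθ : ρ ≤ θ) (hρθ1 : θ = 1 → ρ < 1) :
    ∃ K ≥ 0, ∀ R ≥ 0,
      ∫⁻ s in Ioc 0 R, ENNReal.ofReal (max a s ^ (-θ)) ≤ ENNReal.ofReal (K * R ^ (1 - ρ)) := by
  rcases hρ1.lt_or_eq with hρ1 | rfl
  · refine ⟨a ^ (ρ - θ) / (1 - ρ), div_nonneg (by positivity) (by linarith), fun R hR => ?_⟩
    calc ∫⁻ s in Ioc 0 R, ENNReal.ofReal (max a s ^ (-θ))
        ≤ ∫⁻ s in Ioc 0 R, ENNReal.ofReal (a ^ (ρ - θ)) * ENNReal.ofReal (s ^ (-ρ)) :=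
          setLIntegral_mono' measurableSet_Ioc fun s hs => by
            rw [← ENNReal.ofReal_mul (by positivity)]
            exact ENNReal.ofReal_le_ofReal
              (max_rpow_neg_le_rpow_sub_mul_rpow_neg ha hρ0.le hρθ hs.1)
      _ = ENNReal.ofReal (a ^ (ρ - θ) / (1 - ρ) * R ^ (1 - ρ)) := by
        rw [lintegral_const_mul' _ _ ENNReal.ofReal_ne_top, lintegral_Ioc_rpow_neg hρ1 hR,
          ← ENNReal.ofReal_mul (by positivity)]
        ring_nf
  · have hθ : 1 < θ := hρθ.lt_of_ne fun h => (hρθ1 h.symm).false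
    set L := ∫⁻ s in Ioi 0, ENNReal.ofReal (max a s ^ (-θ))
    refine ⟨L.toReal, ENNReal.toReal_nonneg, fun R _ => ?_⟩
    rw [sub_self, Real.rpow_zero, mul_one,
      ENNReal.ofReal_toReal (integrableOn_Ioi_max_rpow_neg ha hθ).lintegral_lt_top.ne]
    exact lintegral_mono_set Ioc_subset_Ioi_self

lemma exists_setLIntegral_min_le_rpow {a θ C₀ ρ : ℝ} (ha0 : 0 < a) (hC₀ : 0 ≤ C₀)
    {μ : Measure ℝ} (hsmall : μ (Ioo 0 a) = 0)
    (htail : ∀ t : ℝ, a ≤ t → μ (Ici t) ≤ ENNReal.ofReal (C₀ * t ^ (-θ)))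
    (hρ0 : 0 < ρ) (hρ1 : ρ ≤ 1) (hρθ : ρ ≤ θ) (hρθ1 : θ = 1 → ρ < 1) :
    ∃ K ≥ 0, ∀ R ≥ 0,
      ∫⁻ x in Ioi 0, ENNReal.ofReal (min x R) ∂μ ≤ ENNReal.ofReal (K * R ^ (1 - ρ)) := by
  obtain ⟨K, hK0, hK⟩ := exists_lintegral_Ioc_max_rpow_neg_le ha0 hρ0 hρ1 hρθ hρθ1
  refine ⟨C₀ * K, by positivity, fun R hR => ?_⟩
  have hpos : ∀ᵐ x ∂μ.restrict (Ioi 0), 0 ≤ x :=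
    (ae_restrict_iff' measurableSet_Ioi).mpr (.of_forall fun _ hx => le_of_lt hx)
  calc ∫⁻ x in Ioi 0, ENNReal.ofReal (min x R) ∂μ
      ≤ ∫⁻ s in Ioc 0 R, μ.restrict (Ioi 0) (Ici s) :=
        lintegral_ofReal_min_le_lintegral_measure_Ici _ hpos hR
    _ ≤ ∫⁻ s in Ioc 0 R, ENNReal.ofReal C₀ * ENNReal.ofReal (max a s ^ (-θ)) :=
        lintegral_mono fun s => by
          rw [← ENNReal.ofReal_mul hC₀]
          exact measure_restrict_Ioi_Ici_le hsmall htail s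
    _ ≤ ENNReal.ofReal C₀ * ENNReal.ofReal (K * R ^ (1 - ρ)) := by
        rw [lintegral_const_mul' _ _ ENNReal.ofReal_ne_top]
        gcongr
        exact hK R hR
    _ = ENNReal.ofReal (C₀ * K * R ^ (1 - ρ)) := by rw [← ENNReal.ofReal_mul hC₀, mul_assoc]

lemma setLIntegral_abs_tauTrunc_le_of_min_le (μ : Measure ℝ) {K ρ : ℝ}
    (hK : ∀ R ≥ 0,
      ∫⁻ x in Ioi 0, ENNReal.ofReal (min x R) ∂μ ≤ ENNReal.ofReal (K * R ^ (1 - ρ)))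
    (u : ℝ) :
    ∫⁻ x in Ioi 0, ENNReal.ofReal |tauTrunc (u * x)| ∂μ ≤ ENNReal.ofReal (K * |u| ^ ρ) := by
  rcases eq_or_ne u 0 with rfl | hu
  · simp [tauTrunc]
  have hu0 : 0 < |u| := abs_pos.mpr hu
  calc ∫⁻ x in Ioi 0, ENNReal.ofReal |tauTrunc (u * x)| ∂μ
      ≤ ∫⁻ x in Ioi 0, ENNReal.ofReal |u| * ENNReal.ofReal (min x |u|⁻¹) ∂μ :=
        setLIntegral_mono' measurableSet_Ioi fun x (hx : 0 < x) => by
          rw [← ENNReal.ofReal_mul (abs_nonneg u), mul_min_of_nonneg _ _ (abs_nonneg u),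
            mul_inv_cancel₀ hu0.ne']
          refine ENNReal.ofReal_le_ofReal ((abs_tauTrunc_le_min _).trans_eq ?_)
          rw [abs_mul, abs_of_pos hx]
    _ ≤ ENNReal.ofReal |u| * ENNReal.ofReal (K * |u|⁻¹ ^ (1 - ρ)) := by
        rw [lintegral_const_mul' _ _ ENNReal.ofReal_ne_top]
        gcongr
        exact hK _ (inv_nonneg.mpr (abs_nonneg u))
    _ = ENNReal.ofReal (K * |u| ^ ρ) := by
        rw [← ENNReal.ofReal_mul (abs_nonneg u), Real.inv_rpow hu0.le, Real.rpow_sub hu0,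
          Real.rpow_one]
        field_simp

theorem stmt_6_general
    (a θ C₀ : ℝ) (ha0 : 0 < a) (hC₀ : 0 < C₀)
    (μ : Measure ℝ) [IsFiniteMeasure μ]
    (hsmall : μ (Set.Ioo 0 a) = 0)
    (htail : ∀ t : ℝ, a ≤ t → μ (Set.Ici t) ≤ ENNReal.ofReal (C₀ * t ^ (-θ)))
    (ρ : ℝ) (hρ0 : 0 < ρ) (hρ1 : ρ ≤ 1) (hρθ : ρ ≤ θ) (hρθ1 : θ = 1 → ρ < 1) :
    ∃ C > (0 : ℝ), ∀ u : ℝ,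
      ∫⁻ x in Set.Ioi (0 : ℝ), ENNReal.ofReal |tauTrunc (u * x)| ∂μ ≤
        ENNReal.ofReal (C * ((if |u| ≤ 1 then |u| ^ ρ else 0) +
          (if 1 < |u| then 1 else 0))) := by
  obtain ⟨K, hK0, hK⟩ :=
    exists_setLIntegral_min_le_rpow ha0 hC₀.le hsmall htail hρ0 hρ1 hρθ hρθ1
  set M := (μ univ).toReal
  refine ⟨K + M + 1, by positivity, fun u => ?_⟩
  by_cases hu : |u| ≤ 1
  · rw [if_pos hu, if_neg hu.not_gt, add_zero]
    refine (setLIntegral_abs_tauTrunc_le_of_min_le μ hK u).trans (ENNReal.ofReal_le_ofReal ?_)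
    gcongr
    linarith [ENNReal.toReal_nonneg (a := μ univ)]
  · rw [if_neg hu, if_pos (not_le.mp hu), zero_add, mul_one]
    calc ∫⁻ x in Ioi 0, ENNReal.ofReal |tauTrunc (u * x)| ∂μ
        ≤ μ univ :=
          (setLIntegral_abs_tauTrunc_le_measure μ _ _).trans (measure_mono (subset_univ _))
      _ = ENNReal.ofReal M := (ENNReal.ofReal_toReal (measure_ne_top μ _)).symm
      _ ≤ ENNReal.ofReal (K + M + 1) := ENNReal.ofReal_le_ofReal (by linarith)

/-- Estimate (4.5): `∫ |τ(ux)| μ(dx) ≤ C (|u|^ρ 1_{|u|≤1} + 1_{|u|>1})`. -/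
theorem stmt_6
    (a θ C₀ : ℝ) (ha0 : 0 < a) (ha1 : a ≤ 1) (hθ0 : 0 < θ) (hθ2 : θ ≤ 2) (hC₀ : 0 < C₀)
    (μ : Measure ℝ) [IsFiniteMeasure μ]
    (hsupp : μ (Set.Iic 0) = 0) (hsmall : μ (Set.Ioo 0 a) = 0)
    (htail : ∀ t : ℝ, a ≤ t → μ (Set.Ici t) ≤ ENNReal.ofReal (C₀ * t ^ (-θ)))
    (ρ : ℝ) (hρ0 : 0 < ρ) (hρ1 : ρ ≤ 1) (hρθ : ρ ≤ θ) (hρθ1 : θ = 1 → ρ < 1) :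
    ∃ C > (0 : ℝ), ∀ u : ℝ,
      ∫⁻ x in Set.Ioi (0 : ℝ), ENNReal.ofReal |tauTrunc (u * x)| ∂μ ≤
        ENNReal.ofReal (C * ((if |u| ≤ 1 then |u| ^ ρ else 0) +
          (if 1 < |u| then 1 else 0))) :=
  stmt_6_general a θ C₀ ha0 hC₀ μ hsmall htail ρ hρ0 hρ1 hρθ hρθ1

end
end

section
/- Let ν be a Lévy measure on ℝ, let q ≥ 1 and β' ∈ (0, 2], and assume ∫_{|x|≤1} |x|^{β'} ν(dx) < ∞ and ∫_{|x|≤1} |x|^{max(q, β')} ν(dx) < ∞ (the latter is automatic when q ≤ β'). Then there exists C > 0, independent of a, such that for every a ∈ (0, 1] and every y ∈ ℝ: ∫_{[−a,a]} ( |y x|² · 1_{|y x| ≤ 1} + |y x|^q · 1_{|y x| > 1} ) ν(dx) ≤ C ( |y|² · 1_{|y| ≤ 1} + |y|^{max(β', q)} · 1_{|y| > 1} ). -/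
open MeasureTheory Set
open scoped ENNReal

private lemma aux_rpow_le (t p r : ℝ) (ht0 : 0 ≤ t) (ht1 : t ≤ 1) (hp : 0 < p)
    (hpr : p ≤ r) : t ^ r ≤ t ^ p := by
  rcases ht0.eq_or_lt with h | h
  · rw [← h, Real.zero_rpow (by linarith : r ≠ 0), Real.zero_rpow hp.ne']
  · exact Real.rpow_le_rpow_of_exponent_ge h ht1 hpr

/-- Lemma 4.6: the small-jump estimate, with a constant independent of `a`. -/
theorem stmt_8
    (ν : Measure ℝ) (hν0 : ν {0} = 0)
    (hν2 : ∫⁻ x : ℝ, ENNReal.ofReal (min 1 (x ^ 2)) ∂ν < ⊤)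
    (q : ℝ) (hq : 1 ≤ q) (β' : ℝ) (hβ'0 : 0 < β') (hβ'2 : β' ≤ 2)
    (hβ'mom : ∫⁻ x in {x : ℝ | |x| ≤ 1}, ENNReal.ofReal (|x| ^ β') ∂ν < ⊤)
    (hqmom : ∫⁻ x in {x : ℝ | |x| ≤ 1}, ENNReal.ofReal (|x| ^ max q β') ∂ν < ⊤) :
    ∃ C > (0 : ℝ), ∀ a : ℝ, 0 < a → a ≤ 1 → ∀ y : ℝ,
      ∫⁻ x in Set.Icc (-a) a,
          ENNReal.ofReal ((if |y * x| ≤ 1 then |y * x| ^ 2 else 0) +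
            (if 1 < |y * x| then |y * x| ^ q else 0)) ∂ν ≤
        ENNReal.ofReal (C * ((if |y| ≤ 1 then |y| ^ 2 else 0) +
          (if 1 < |y| then |y| ^ max β' q else 0))) := by
  set m : ℝ := max q β' with hm
  have hβm : β' ≤ m := le_max_right q β'
  have hqm : q ≤ m := le_max_left q β'
  have hmax : max β' q = m := max_comm β' q
  set S : Set ℝ := {x : ℝ | |x| ≤ 1} with hS
  have hSm : MeasurableSet S := by
    have : S = Set.Icc (-1 : ℝ) 1 := by ext x; simp [hS, abs_le]
    rw [this]; exact measurableSet_Icc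
  set A := ∫⁻ x in S, ENNReal.ofReal (|x| ^ β') ∂ν with hA
  set B := ∫⁻ x in S, ENNReal.ofReal (|x| ^ m) ∂ν with hB
  have hAB : A + B < ⊤ := ENNReal.add_lt_top.mpr ⟨hβ'mom, hqmom⟩
  refine ⟨(A + B).toReal + 1, by positivity, ?_⟩
  intro a ha0 ha1 y
  have hsub : Set.Icc (-a) a ⊆ S := by
    intro x hx
    simp only [hS, Set.mem_setOf_eq, abs_le]
    exact ⟨le_trans (by linarith) hx.1, le_trans hx.2 ha1⟩
  set gy : ℝ := (if |y| ≤ 1 then |y| ^ 2 else 0) + (if 1 < |y| then |y| ^ max β' q else 0)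
    with hgy
  have hgy0 : 0 ≤ gy := by
    apply add_nonneg <;> split <;> positivity
  have hmeas : Measurable fun x : ℝ => ENNReal.ofReal (|x| ^ β') := by fun_prop
  calc ∫⁻ x in Set.Icc (-a) a,
          ENNReal.ofReal ((if |y * x| ≤ 1 then |y * x| ^ 2 else 0) +
            (if 1 < |y * x| then |y * x| ^ q else 0)) ∂ν
      ≤ ∫⁻ x in S,
          ENNReal.ofReal ((if |y * x| ≤ 1 then |y * x| ^ 2 else 0) +
            (if 1 < |y * x| then |y * x| ^ q else 0)) ∂ν := lintegral_mono_set hsub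
    _ ≤ ∫⁻ x in S,
          ENNReal.ofReal gy * (ENNReal.ofReal (|x| ^ β') + ENNReal.ofReal (|x| ^ m)) ∂ν := by
        apply lintegral_mono_ae
        refine ae_restrict_of_forall_mem hSm ?_
        intro x hx
        have hx1 : |x| ≤ 1 := hx
        have hx0 : (0 : ℝ) ≤ |x| := abs_nonneg x
        have hy0 : (0 : ℝ) ≤ |y| := abs_nonneg y
        have hb0 : (0 : ℝ) ≤ |x| ^ β' := Real.rpow_nonneg hx0 _
        have hm0 : (0 : ℝ) ≤ |x| ^ m := Real.rpow_nonneg hx0 _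
        rw [← ENNReal.ofReal_add hb0 hm0, ← ENNReal.ofReal_mul hgy0]
        apply ENNReal.ofReal_le_ofReal
        have habs : |y * x| = |y| * |x| := abs_mul y x
        by_cases hy : |y| ≤ 1
        · have hz : |y * x| ≤ 1 := by
            rw [habs]; exact mul_le_one₀ hy hx0 hx1
          have hz' : ¬ (1 < |y|) := not_lt.mpr hy
          simp only [hgy, if_pos hy, if_neg hz', if_pos hz, if_neg (not_lt.mpr hz),
            add_zero]
          have h2 : |x| ^ 2 ≤ |x| ^ β' := by
            have := aux_rpow_le |x| β' 2 hx0 hx1 hβ'0 hβ'2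
            rwa [show ((2 : ℝ) : ℝ) = ((2 : ℕ) : ℝ) by norm_num,
              Real.rpow_natCast] at this
          calc |y * x| ^ 2 = |y| ^ 2 * |x| ^ 2 := by rw [habs, mul_pow]
            _ ≤ |y| ^ 2 * (|x| ^ β') := by
                exact mul_le_mul_of_nonneg_left h2 (by positivity)
            _ ≤ |y| ^ 2 * (|x| ^ β' + |x| ^ m) := by
                exact mul_le_mul_of_nonneg_left (le_add_of_nonneg_right hm0) (by positivity)
        · have hy1 : 1 < |y| := not_le.mp hy
          have hy1' : (1 : ℝ) ≤ |y| := hy1.le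
          have hym0 : (0 : ℝ) ≤ |y| ^ m := Real.rpow_nonneg hy0 _
          simp only [hgy, if_neg hy, if_pos hy1, zero_add, hmax]
          by_cases hz : |y * x| ≤ 1
          · simp only [if_pos hz, if_neg (not_lt.mpr hz), add_zero]
            have hz0 : (0 : ℝ) ≤ |y * x| := abs_nonneg _
            have h2 : |y * x| ^ 2 ≤ |y * x| ^ β' := by
              have := aux_rpow_le (|y * x|) β' 2 hz0 hz hβ'0 hβ'2
              rwa [show ((2 : ℝ) : ℝ) = ((2 : ℕ) : ℝ) by norm_num,
                Real.rpow_natCast] at this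
            calc |y * x| ^ 2 ≤ |y * x| ^ β' := h2
              _ = |y| ^ β' * |x| ^ β' := by rw [habs, Real.mul_rpow hy0 hx0]
              _ ≤ |y| ^ m * |x| ^ β' := by
                  exact mul_le_mul_of_nonneg_right
                    (Real.rpow_le_rpow_of_exponent_le hy1' hβm) hb0
              _ ≤ |y| ^ m * (|x| ^ β' + |x| ^ m) := by
                  exact mul_le_mul_of_nonneg_left (le_add_of_nonneg_right hm0) hym0
          · have hz1 : 1 < |y * x| := not_le.mp hz
            simp only [if_neg hz, if_pos hz1, zero_add]
            calc |y * x| ^ q ≤ |y * x| ^ m :=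
                  Real.rpow_le_rpow_of_exponent_le hz1.le hqm
              _ = |y| ^ m * |x| ^ m := by rw [habs, Real.mul_rpow hy0 hx0]
              _ ≤ |y| ^ m * (|x| ^ β' + |x| ^ m) := by
                  exact mul_le_mul_of_nonneg_left (le_add_of_nonneg_left hb0) hym0
    _ = ENNReal.ofReal gy * (A + B) := by
        rw [lintegral_const_mul' _ _ ENNReal.ofReal_ne_top,
          lintegral_add_left hmeas]
    _ ≤ ENNReal.ofReal (((A + B).toReal + 1) * gy) := by
        rw [ENNReal.ofReal_mul (by positivity)]
        rw [mul_comm]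
        apply mul_le_mul_left
        calc A + B = ENNReal.ofReal (A + B).toReal := (ENNReal.ofReal_toReal hAB.ne).symm
          _ ≤ ENNReal.ofReal ((A + B).toReal + 1) := ENNReal.ofReal_le_ofReal (by linarith)
end

section
/- For all α, q ∈ (0, ∞), every t > 0 and every real sequence (a_n)_{n≥1} with a_n → 0 as n → ∞, one has lim_{ε ↓ 0} limsup_{n → ∞} ( (1/n) Σ_{i=k}^{⌊nt⌋} ‖ v_σ(i/n, ε + |a_n|) ‖_q^α ) = 0. -/
open MeasureTheory Set Filter
open scoped ENNReal Topology

noncomputable section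

/-- The modulus of continuity `v_σ(s, η)(ω) = sup{ |σ_s(ω) − σ_r(ω)| : r ∈ [s−η, s+η] }`
for `η ≥ 0`, and `0` for `η < 0`. -/
def modCont {Ω : Type*} (σ : ℝ → Ω → ℝ) (s η : ℝ) (ω : Ω) : ℝ :=
  if 0 ≤ η then sSup ((fun r => |σ s ω - σ r ω|) '' Set.Icc (s - η) (s + η)) else 0

/-- `‖Y‖_q = E[|Y|^q]^{1/q}`. -/
def lqNorm {Ω : Type*} [MeasurableSpace Ω] (P : Measure Ω) (q : ℝ) (Y : Ω → ℝ) : ℝ :=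
  (∫ ω, |Y ω| ^ q ∂P) ^ (1 / q)

/-- A path `f : ℝ → ℝ` is càdlàg: right-continuous with left limits. -/
def IsCadlag (f : ℝ → ℝ) : Prop :=
  (∀ s : ℝ, ContinuousWithinAt f (Set.Ici s) s) ∧
    (∀ s : ℝ, ∃ l : ℝ, Filter.Tendsto f (nhdsWithin s (Set.Iio s)) (nhds l))

/-- A path `f : ℝ → ℝ` is càglàd: left-continuous with right limits. -/
def IsCaglad (f : ℝ → ℝ) : Prop :=
  (∀ s : ℝ, ContinuousWithinAt f (Set.Iic s) s) ∧
    (∀ s : ℝ, ∃ l : ℝ, Filter.Tendsto f (nhdsWithin s (Set.Ioi s)) (nhds l))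

/-!
A càdlàg or càglàd path on `[0, t]` has, for each `η > 0`, a finite set `F` of places where it
can oscillate by `η` or more: away from the `ρ`-neighbourhood of `F`, every window of radius
`ρ < L` has oscillation `< η`, while at most `#F (2ρn + 1)` grid points `i / n` fall near `F`.
Hence the pathwise average `(1/n) ∑ v_σ(i/n, ρ)^q` is eventually at most `(t + 1) η^q + O(ρ)`,
and its `limsup` in `n` vanishes as `ρ ↓ 0`. Reverse Fatou and dominated convergence carry this
to the expectations; the bound `x^(α/q) ≤ c + K x` on `[0, (2M)^q]` passes from `q`-th moments
to `‖·‖_q^α`; and `ε + |a_n| ≤ 2ε` for large `n`.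
-/

section ModCont

variable {Ω : Type*} (σ : ℝ → Ω → ℝ) {s η c M : ℝ} (ω : Ω)

lemma modCont_nonneg : 0 ≤ modCont σ s η ω := by
  unfold modCont
  split_ifs
  · exact Real.sSup_nonneg (by rintro _ ⟨r, -, rfl⟩; exact abs_nonneg _)
  · rfl

lemma modCont_le (hη : 0 ≤ η) (h : ∀ r ∈ Icc (s - η) (s + η), |σ r ω - σ s ω| ≤ c) :
    modCont σ s η ω ≤ c := by
  rw [modCont, if_pos hη]
  refine csSup_le ⟨_, mem_image_of_mem _ (left_mem_Icc.2 (by linarith))⟩ ?_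
  rintro _ ⟨r, hr, rfl⟩
  exact (abs_sub_comm _ _).trans_le (h r hr)

lemma modCont_le_two_mul (hη : 0 ≤ η) (hb : ∀ r ∈ Icc (s - η) (s + η), |σ r ω| ≤ M) :
    modCont σ s η ω ≤ 2 * M :=
  modCont_le σ ω hη fun r hr ↦ by
    have hs := hb s ⟨by linarith, by linarith⟩
    linarith [abs_sub (σ r ω) (σ s ω), hb r hr]

lemma bddAbove_abs_sub_image_Icc (hb : ∀ r ∈ Icc (s - η) (s + η), |σ r ω| ≤ M) :
    BddAbove ((fun r ↦ |σ s ω - σ r ω|) '' Icc (s - η) (s + η)) := by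
  refine ⟨2 * M, ?_⟩
  rintro _ ⟨r, hr, rfl⟩
  have hs := hb s ⟨by linarith [hr.1, hr.2], by linarith [hr.1, hr.2]⟩
  linarith [abs_sub (σ s ω) (σ r ω), hb r hr]

lemma abs_sub_le_modCont (hb : ∀ r ∈ Icc (s - η) (s + η), |σ r ω| ≤ M) {r : ℝ}
    (hr : r ∈ Icc (s - η) (s + η)) : |σ s ω - σ r ω| ≤ modCont σ s η ω := by
  rw [modCont, if_pos (by linarith [hr.1, hr.2])]
  exact le_csSup (bddAbove_abs_sub_image_Icc σ ω hb) (mem_image_of_mem _ hr)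

lemma modCont_mono {η' : ℝ} (hη : 0 ≤ η) (hηη' : η ≤ η')
    (hb : ∀ r ∈ Icc (s - η') (s + η'), |σ r ω| ≤ M) :
    modCont σ s η ω ≤ modCont σ s η' ω :=
  modCont_le σ ω hη fun r hr ↦ (abs_sub_comm _ _).trans_le <|
    abs_sub_le_modCont σ ω hb ⟨by linarith [hr.1], by linarith [hr.2]⟩

end ModCont

lemma Icc_subset_closure_Ioo_inter_range_ratCast {a b : ℝ} (hab : a < b) :
    Icc a b ⊆ closure (Ioo a b ∩ range ((↑) : ℚ → ℝ)) :=
  closure_Ioo hab.ne ▸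
    closure_minimal (Rat.denseRange_cast.open_subset_closure_inter isOpen_Ioo) isClosed_closure

lemma le_csSup_image_of_mem_closure {g : ℝ → ℝ} {D T : Set ℝ} {r : ℝ}
    (hg : ContinuousWithinAt g T r) (hr : r ∈ closure (D ∩ T)) (hbdd : BddAbove (g '' D)) :
    g r ≤ sSup (g '' D) :=
  closure_minimal ((image_mono inter_subset_left).trans fun _ hy ↦ le_csSup hbdd hy) isClosed_Iic
    ((hg.mono inter_subset_right).mem_closure_image hr)

lemma csSup_image_Icc_eq_image_ratCast {g : ℝ → ℝ} {a b : ℝ} (hab : a ≤ b)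
    (hg : (∀ r, ContinuousWithinAt g (Ici r) r) ∨ ∀ r, ContinuousWithinAt g (Iic r) r)
    (hbdd : BddAbove (g '' Icc a b)) :
    sSup (g '' Icc a b) = sSup (g '' insert a (insert b (Ioo a b ∩ range ((↑) : ℚ → ℝ)))) := by
  set D := insert a (insert b (Ioo a b ∩ range ((↑) : ℚ → ℝ)))
  have hD : D ⊆ Icc a b := by
    rintro r (rfl | rfl | ⟨hr, -⟩)
    exacts [left_mem_Icc.2 hab, right_mem_Icc.2 hab, Ioo_subset_Icc_self hr]
  have hbddD : BddAbove (g '' D) := hbdd.mono (image_mono hD)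
  refine le_antisymm (csSup_le (by simpa using hab) ?_)
    (csSup_le_csSup hbdd (by simp [D]) (image_mono hD))
  rintro _ ⟨r, hr, rfl⟩
  rcases hg with hg | hg
  · rcases hr.2.eq_or_lt with rfl | hrb
    · exact le_csSup hbddD (mem_image_of_mem g (by simp [D]))
    refine le_csSup_image_of_mem_closure (hg r) (closure_mono ?_
      (Icc_subset_closure_Ioo_inter_range_ratCast hrb (left_mem_Icc.2 hrb.le))) hbddD
    exact fun x ⟨hx, hq⟩ ↦ ⟨.inr (.inr ⟨⟨hr.1.trans_lt hx.1, hx.2⟩, hq⟩), hx.1.le⟩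
  · rcases hr.1.eq_or_lt with rfl | har
    · exact le_csSup hbddD (mem_image_of_mem g (by simp [D]))
    refine le_csSup_image_of_mem_closure (hg r) (closure_mono ?_
      (Icc_subset_closure_Ioo_inter_range_ratCast har (right_mem_Icc.2 har.le))) hbddD
    exact fun x ⟨hx, hq⟩ ↦ ⟨.inr (.inr ⟨⟨hx.1, hx.2.trans_le hr.2⟩, hq⟩), hx.2.le⟩

lemma measurable_modCont {Ω : Type*} [MeasurableSpace Ω] {σ : ℝ → Ω → ℝ}
    (hmeas : Measurable (Function.uncurry σ))
    (hpaths : (∀ ω, IsCadlag (fun s => σ s ω)) ∨ (∀ ω, IsCaglad (fun s => σ s ω)))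
    {s η M : ℝ} (hη : 0 ≤ η) (hb : ∀ ω, ∀ r ∈ Icc (s - η) (s + η), |σ r ω| ≤ M) :
    Measurable (modCont σ s η) := by
  have hsup : modCont σ s η = fun ω ↦ sSup ((fun r ↦ |σ s ω - σ r ω|) ''
      insert (s - η) (insert (s + η) (Ioo (s - η) (s + η) ∩ range ((↑) : ℚ → ℝ)))) := by
    funext ω
    rw [modCont, if_pos hη]
    refine csSup_image_Icc_eq_image_ratCast (by linarith) ?_
      (bddAbove_abs_sub_image_Icc σ ω (hb ω))
    exact hpaths.imp (fun h r ↦ (continuousWithinAt_const.sub ((h ω).1 r)).abs)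
      (fun h r ↦ (continuousWithinAt_const.sub ((h ω).1 r)).abs)
  rw [hsup]
  refine Measurable.sSup ((((countable_range _).mono inter_subset_right).insert _).insert _)
    fun r _ ↦ (hmeas.of_uncurry_left.sub hmeas.of_uncurry_left).abs

lemma exists_tendsto_nhdsLT_and_nhdsGT {f : ℝ → ℝ} (hf : IsCadlag f ∨ IsCaglad f) (x : ℝ) :
    (∃ l, Tendsto f (𝓝[<] x) (𝓝 l)) ∧ ∃ l, Tendsto f (𝓝[>] x) (𝓝 l) := by
  rcases hf with ⟨hr, hl⟩ | ⟨hl, hr⟩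
  · exact ⟨hl x, f x, (hr x).tendsto.mono_left (nhdsWithin_mono _ Ioi_subset_Ici_self)⟩
  · exact ⟨⟨f x, (hl x).tendsto.mono_left (nhdsWithin_mono _ Iio_subset_Iic_self)⟩, hr x⟩

section Oscillation

variable {E : Type*} [PseudoMetricSpace E] {f : ℝ → E} {x η : ℝ} {l : E}

lemma exists_dist_lt_on_Ioo_of_tendsto_nhdsLT (h : Tendsto f (𝓝[<] x) (𝓝 l)) (hη : 0 < η) :
    ∃ c < x, ∀ y ∈ Ioo c x, ∀ z ∈ Ioo c x, dist (f y) (f z) < η := by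
  obtain ⟨c, hc, hsub⟩ :=
    mem_nhdsLT_iff_exists_Ioo_subset.1 (h (Metric.ball_mem_nhds l (half_pos hη)))
  refine ⟨c, hc, fun y hy z hz ↦ ?_⟩
  linarith [dist_triangle_right (f y) (f z) l, Metric.mem_ball.1 (hsub hy),
    Metric.mem_ball.1 (hsub hz)]

lemma exists_dist_lt_on_Ioo_of_tendsto_nhdsGT (h : Tendsto f (𝓝[>] x) (𝓝 l)) (hη : 0 < η) :
    ∃ d > x, ∀ y ∈ Ioo x d, ∀ z ∈ Ioo x d, dist (f y) (f z) < η := by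
  obtain ⟨d, hd, hsub⟩ :=
    mem_nhdsGT_iff_exists_Ioo_subset.1 (h (Metric.ball_mem_nhds l (half_pos hη)))
  refine ⟨d, hd, fun y hy z hz ↦ ?_⟩
  linarith [dist_triangle_right (f y) (f z) l, Metric.mem_ball.1 (hsub hy),
    Metric.mem_ball.1 (hsub hz)]

end Oscillation

/-- Cover `[A, B]` by intervals `(c x, d x)` on both halves of which `f` is `η`-Cauchy and take
a Lebesgue number `L`; a window avoiding the centre `x` lies in one half. -/
lemma exists_finset_dist_lt_of_notMem_Icc {f : ℝ → ℝ} (hf : IsCadlag f ∨ IsCaglad f) {η : ℝ}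
    (hη : 0 < η) (A B : ℝ) :
    ∃ F : Finset ℝ, ∃ L > 0, ∀ s ∈ Icc A B, ∀ ρ < L, (∀ x ∈ F, x ∉ Icc (s - ρ) (s + ρ)) →
      ∀ r ∈ Icc (s - ρ) (s + ρ), dist (f r) (f s) < η := by
  have hloc (x : ℝ) : ∃ c < x, ∃ d > x,
      (∀ y ∈ Ioo c x, ∀ z ∈ Ioo c x, dist (f y) (f z) < η) ∧
        ∀ y ∈ Ioo x d, ∀ z ∈ Ioo x d, dist (f y) (f z) < η := by
    obtain ⟨⟨l₁, h₁⟩, ⟨l₂, h₂⟩⟩ := exists_tendsto_nhdsLT_and_nhdsGT hf x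
    obtain ⟨c, hc, hc'⟩ := exists_dist_lt_on_Ioo_of_tendsto_nhdsLT h₁ hη
    obtain ⟨d, hd, hd'⟩ := exists_dist_lt_on_Ioo_of_tendsto_nhdsGT h₂ hη
    exact ⟨c, hc, d, hd, hc', hd'⟩
  choose c hc d hd hleft hright using hloc
  obtain ⟨F, hF⟩ := isCompact_Icc.elim_finite_subcover (fun x ↦ Ioo (c x) (d x))
    (fun _ ↦ isOpen_Ioo) fun s _ ↦ mem_iUnion.2 ⟨s, hc s, hd s⟩
  obtain ⟨L, hL, hball⟩ := lebesgue_number_lemma_of_metric isCompact_Icc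
    (c := fun x : F ↦ Ioo (c x) (d x)) (fun _ ↦ isOpen_Ioo) fun s hs ↦ by
      obtain ⟨x, hx, hsx⟩ := mem_iUnion₂.1 (hF hs)
      exact mem_iUnion.2 ⟨⟨x, hx⟩, hsx⟩
  refine ⟨F, L, hL, fun s hs ρ hρ hfar r hr ↦ ?_⟩
  obtain ⟨⟨x, hxF⟩, hsub⟩ := hball s hs
  have hmem {y : ℝ} (hy : y ∈ Icc (s - ρ) (s + ρ)) : y ∈ Ioo (c x) (d x) :=
    hsub <| Metric.mem_ball.2 <| (Real.dist_eq y s).trans_lt <|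
      (abs_le.2 ⟨by linarith [hy.1], by linarith [hy.2]⟩).trans_lt hρ
  have hs' : s ∈ Icc (s - ρ) (s + ρ) := ⟨by linarith [hr.1, hr.2], by linarith [hr.1, hr.2]⟩
  rcases not_and_or.1 (hfar x hxF) with hx | hx <;> push Not at hx
  · exact hright x r ⟨by linarith [hr.1], (hmem hr).2⟩ s ⟨by linarith [hr.1, hr.2], (hmem hs').2⟩
  · exact hleft x r ⟨(hmem hr).1, by linarith [hr.2]⟩ s ⟨(hmem hs').1, by linarith [hr.1, hr.2]⟩

lemma card_filter_natCast_mem_Icc_le (S : Finset ℕ) {u w : ℝ} (hw : 0 ≤ w) :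
    ((S.filter fun i : ℕ ↦ (i : ℝ) ∈ Icc u (u + w)).card : ℝ) ≤ w + 1 := by
  set T := S.filter fun i : ℕ ↦ (i : ℝ) ∈ Icc u (u + w)
  rcases T.eq_empty_or_nonempty with hT | hT
  · rw [hT, Finset.card_empty, Nat.cast_zero]; linarith
  have hsub : T ⊆ Finset.Icc (T.min' hT) (T.min' hT + ⌊w⌋₊) := fun i hi ↦ by
    have hi₀ := (Finset.mem_filter.1 (T.min'_mem hT)).2
    have hle := T.min'_le i hi
    have hdiff : ((i - T.min' hT : ℕ) : ℝ) ≤ w := by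
      rw [Nat.cast_sub hle]; linarith [(Finset.mem_filter.1 hi).2.2, hi₀.1]
    have := Nat.le_floor hdiff
    exact Finset.mem_Icc.2 ⟨hle, by omega⟩
  calc (T.card : ℝ) ≤ ⌊w⌋₊ + 1 := by
        exact_mod_cast (Finset.card_le_card hsub).trans (by rw [Nat.card_Icc]; omega)
    _ ≤ w + 1 := by linarith [Nat.floor_le hw]

lemma card_filter_mem_Icc_div_le (S : Finset ℕ) {n : ℕ} (hn : 0 < n) (x : ℝ) {ρ : ℝ}
    (hρ : 0 ≤ ρ) :
    ((S.filter fun i : ℕ ↦ x ∈ Icc ((i : ℝ) / n - ρ) ((i : ℝ) / n + ρ)).card : ℝ) ≤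
      2 * ρ * n + 1 := by
  have hn' : (0 : ℝ) < n := Nat.cast_pos.2 hn
  refine le_trans ?_ (card_filter_natCast_mem_Icc_le S (u := (x - ρ) * n) (by positivity))
  refine Nat.cast_le.2 (Finset.card_le_card fun i hi ↦ ?_)
  obtain ⟨hiS, hx⟩ := Finset.mem_filter.1 hi
  have h₁ : (x - ρ) * n ≤ i := by rw [← le_div_iff₀ hn']; linarith [hx.2]
  have h₂ : (i : ℝ) ≤ (x + ρ) * n := by rw [← div_le_iff₀ hn']; linarith [hx.1]
  exact Finset.mem_filter.2 ⟨hiS, h₁, by linarith⟩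

lemma one_div_mul_sum_Icc_floor_le {x : ℕ → ℝ} {t B : ℝ} (ht : 0 ≤ t) (hB : 0 ≤ B) (k n : ℕ)
    (hx : ∀ i ∈ Finset.Icc k ⌊(n : ℝ) * t⌋₊, x i ≤ B) :
    1 / (n : ℝ) * ∑ i ∈ Finset.Icc k ⌊(n : ℝ) * t⌋₊, x i ≤ (t + 1) * B := by
  rcases n.eq_zero_or_pos with rfl | hn
  · simp only [Nat.cast_zero, div_zero, zero_mul]; positivity
  have hn' : (0 : ℝ) < n := Nat.cast_pos.2 hn
  have hn1 : (1 : ℝ) ≤ n := Nat.one_le_cast.2 hn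
  have hcard : ((Finset.Icc k ⌊(n : ℝ) * t⌋₊).card : ℝ) ≤ (t + 1) * n := by
    have : (Finset.Icc k ⌊(n : ℝ) * t⌋₊).card ≤ ⌊(n : ℝ) * t⌋₊ + 1 := by
      rw [Nat.card_Icc]; omega
    have := Nat.floor_le (by positivity : (0 : ℝ) ≤ n * t)
    have : ((Finset.Icc k ⌊(n : ℝ) * t⌋₊).card : ℝ) ≤ ⌊(n : ℝ) * t⌋₊ + 1 := by exact_mod_cast ‹_›
    nlinarith
  rw [div_mul_eq_mul_div, one_mul, div_le_iff₀ hn']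
  calc ∑ i ∈ Finset.Icc k ⌊(n : ℝ) * t⌋₊, x i
      ≤ (Finset.Icc k ⌊(n : ℝ) * t⌋₊).card * B := by
        simpa using Finset.sum_le_card_nsmul _ _ _ hx
    _ ≤ (t + 1) * n * B := mul_le_mul_of_nonneg_right hcard hB
    _ = (t + 1) * B * n := by ring

lemma card_filter_exists_mem_Icc_div_le (S : Finset ℕ) (F : Finset ℝ) {n : ℕ} (hn : 0 < n)
    {ρ : ℝ} (hρ : 0 ≤ ρ) :
    ((S.filter fun i : ℕ ↦ ∃ x ∈ F, x ∈ Icc ((i : ℝ) / n - ρ) ((i : ℝ) / n + ρ)).card : ℝ) ≤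
      F.card * (2 * ρ * n + 1) := by
  calc _ ≤ ((F.biUnion fun x ↦
          S.filter fun i : ℕ ↦ x ∈ Icc ((i : ℝ) / n - ρ) ((i : ℝ) / n + ρ)).card : ℝ) := by
        refine Nat.cast_le.2 (Finset.card_le_card fun i hi ↦ ?_)
        obtain ⟨hiS, x, hxF, hx⟩ := Finset.mem_filter.1 hi
        exact Finset.mem_biUnion.2 ⟨x, hxF, Finset.mem_filter.2 ⟨hiS, hx⟩⟩
    _ ≤ ∑ x ∈ F, ((S.filter fun i : ℕ ↦
          x ∈ Icc ((i : ℝ) / n - ρ) ((i : ℝ) / n + ρ)).card : ℝ) := by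
        exact_mod_cast Finset.card_biUnion_le
    _ ≤ ∑ _x ∈ F, (2 * ρ * n + 1) :=
        Finset.sum_le_sum fun x _ ↦ card_filter_mem_Icc_div_le S hn x hρ
    _ = F.card * (2 * ρ * n + 1) := by rw [Finset.sum_const, nsmul_eq_mul]

def avgModCont {Ω : Type*} (σ : ℝ → Ω → ℝ) (q t : ℝ) (k n : ℕ) (η : ℝ) (ω : Ω) : ℝ :=
  1 / (n : ℝ) * ∑ i ∈ Finset.Icc k ⌊(n : ℝ) * t⌋₊, modCont σ ((i : ℝ) / n) η ω ^ q

lemma Icc_sub_add_subset_Ici_neg {s η δ : ℝ} (hs : 0 ≤ s) (hη : η ≤ δ) :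
    Icc (s - η) (s + η) ⊆ Ici (-δ) :=
  fun _ hr ↦ mem_Ici.2 (by linarith [hr.1])

section AvgModCont

variable {Ω : Type*} {σ : ℝ → Ω → ℝ} {q t δ M η : ℝ} {ω : Ω}

lemma modCont_rpow_le {s : ℝ} (hs : 0 ≤ s) (hq : 0 < q) (hη : 0 ≤ η) (hηδ : η ≤ δ)
    (hb : ∀ r ∈ Ici (-δ), |σ r ω| ≤ M) :
    modCont σ s η ω ^ q ≤ (2 * M) ^ q :=
  Real.rpow_le_rpow (modCont_nonneg σ ω) (modCont_le_two_mul σ ω hη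
    fun r hr ↦ hb r (Icc_sub_add_subset_Ici_neg hs hηδ hr)) hq.le

lemma avgModCont_nonneg (k n : ℕ) : 0 ≤ avgModCont σ q t k n η ω :=
  mul_nonneg (by positivity)
    (Finset.sum_nonneg fun _ _ ↦ Real.rpow_nonneg (modCont_nonneg σ ω) q)

lemma avgModCont_le (hq : 0 < q) (ht : 0 ≤ t) (hη : 0 ≤ η) (hηδ : η ≤ δ)
    (hb : ∀ r ∈ Ici (-δ), |σ r ω| ≤ M) (k n : ℕ) :
    avgModCont σ q t k n η ω ≤ (t + 1) * (2 * M) ^ q := by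
  have hM : 0 ≤ M := (abs_nonneg _).trans (hb 0 (mem_Ici.2 (by linarith)))
  exact one_div_mul_sum_Icc_floor_le ht (by positivity) k n
    fun i _ ↦ modCont_rpow_le (by positivity) hq hη hηδ hb

lemma avgModCont_le_of_dist_lt {F : Finset ℝ} {ρ : ℝ} (hq : 0 < q) (ht : 0 ≤ t) (hη : 0 ≤ η)
    (hρ : 0 ≤ ρ) (hρδ : ρ ≤ δ) (hb : ∀ r ∈ Ici (-δ), |σ r ω| ≤ M)
    (hosc : ∀ s ∈ Icc 0 t, (∀ x ∈ F, x ∉ Icc (s - ρ) (s + ρ)) →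
      ∀ r ∈ Icc (s - ρ) (s + ρ), dist (σ r ω) (σ s ω) < η)
    (k : ℕ) {n : ℕ} (hn : 0 < n) :
    avgModCont σ q t k n ρ ω ≤ (t + 1) * η ^ q + F.card * (2 * M) ^ q * (2 * ρ + 1 / n) := by
  have hn' : (0 : ℝ) < n := Nat.cast_pos.2 hn
  have hM : 0 ≤ M := (abs_nonneg _).trans (hb 0 (mem_Ici.2 (by linarith)))
  set I := Finset.Icc k ⌊(n : ℝ) * t⌋₊
  set bad : ℕ → Prop := fun i ↦ ∃ x ∈ F, x ∈ Icc ((i : ℝ) / n - ρ) ((i : ℝ) / n + ρ)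
  have hgood : ∀ i ∈ I.filter (¬ bad ·), modCont σ ((i : ℝ) / n) ρ ω ^ q ≤ η ^ q := by
    intro i hi
    obtain ⟨hiI, hfar⟩ := Finset.mem_filter.1 hi
    have hit : (i : ℝ) / n ≤ t := by
      rw [div_le_iff₀ hn']
      have := Nat.floor_le (by positivity : (0 : ℝ) ≤ n * t)
      have : (i : ℝ) ≤ ⌊(n : ℝ) * t⌋₊ := by exact_mod_cast (Finset.mem_Icc.1 hiI).2
      linarith
    refine Real.rpow_le_rpow (modCont_nonneg σ ω) (modCont_le σ ω hρ fun r hr ↦ ?_) hq.le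
    rw [← Real.dist_eq]
    exact (hosc _ ⟨by positivity, hit⟩ (fun x hx hmem ↦ hfar ⟨x, hx, hmem⟩) r hr).le
  have hbad : ∑ i ∈ I.filter bad, modCont σ ((i : ℝ) / n) ρ ω ^ q ≤
      F.card * (2 * ρ * n + 1) * (2 * M) ^ q := by
    refine (Finset.sum_le_card_nsmul _ _ _
      fun i _ ↦ modCont_rpow_le (by positivity) hq hρ hρδ hb).trans ?_
    rw [nsmul_eq_mul]
    exact mul_le_mul_of_nonneg_right (card_filter_exists_mem_Icc_div_le I F hn hρ) (by positivity)
  have hgood_sum : 1 / (n : ℝ) * ∑ i ∈ I.filter (¬ bad ·), modCont σ ((i : ℝ) / n) ρ ω ^ q ≤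
      (t + 1) * η ^ q := by
    refine le_trans ?_ (one_div_mul_sum_Icc_floor_le ht (by positivity) k n fun _ _ ↦ le_rfl)
    gcongr
    exact (Finset.sum_le_sum hgood).trans (Finset.sum_le_sum_of_subset_of_nonneg
      (Finset.filter_subset _ _) fun _ _ _ ↦ by positivity)
  calc avgModCont σ q t k n ρ ω
      = 1 / (n : ℝ) * ∑ i ∈ I.filter (¬ bad ·), modCont σ ((i : ℝ) / n) ρ ω ^ q +
          1 / (n : ℝ) * ∑ i ∈ I.filter bad, modCont σ ((i : ℝ) / n) ρ ω ^ q := by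
        rw [avgModCont, ← Finset.sum_filter_not_add_sum_filter I bad, mul_add]
    _ ≤ (t + 1) * η ^ q + 1 / (n : ℝ) * (F.card * (2 * ρ * n + 1) * (2 * M) ^ q) := by
        gcongr
    _ = (t + 1) * η ^ q + F.card * (2 * M) ^ q * (2 * ρ + 1 / n) := by
        field_simp

lemma eventually_avgModCont_le (hpath : IsCadlag (σ · ω) ∨ IsCaglad (σ · ω)) (hδ : 0 < δ)
    (hb : ∀ r ∈ Ici (-δ), |σ r ω| ≤ M) (hq : 0 < q) (ht : 0 ≤ t) (k : ℕ) {c : ℝ} (hc : 0 < c) :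
    ∀ᶠ ρ in 𝓝[>] 0, ∀ᶠ n in atTop, avgModCont σ q t k n ρ ω ≤ c := by
  have hc' : 0 < c / (2 * (t + 1)) := by positivity
  set η := (c / (2 * (t + 1))) ^ (1 / q)
  have hηq : (t + 1) * η ^ q = c / 2 := by
    rw [← Real.rpow_mul hc'.le, one_div_mul_cancel hq.ne', Real.rpow_one]; field_simp
  obtain ⟨F, L, hL, hosc⟩ :=
    exists_finset_dist_lt_of_notMem_Icc hpath (Real.rpow_pos_of_pos hc' (1 / q)) 0 t
  set C := F.card * (2 * M) ^ q
  have hsmall : ∀ᶠ ρ in 𝓝[>] (0 : ℝ), C * (2 * ρ) < c / 4 :=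
    ((tendsto_id.const_mul 2).const_mul C).mono_left nhdsWithin_le_nhds |>.eventually
      (gt_mem_nhds (by simpa using hc))
  filter_upwards [hsmall, Ioo_mem_nhdsGT (lt_min hL hδ)] with ρ hρ hρ'
  have hn_small : ∀ᶠ n : ℕ in atTop, C * (1 / n) < c / 4 := by
    simpa only [mul_one_div] using (tendsto_const_div_atTop_nhds_zero_nat C).eventually
      (gt_mem_nhds (by positivity))
  filter_upwards [hn_small, eventually_gt_atTop 0] with n hn hn0
  calc avgModCont σ q t k n ρ ω ≤ (t + 1) * η ^ q + C * (2 * ρ + 1 / n) :=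
        avgModCont_le_of_dist_lt hq ht (by positivity) hρ'.1.le
          (hρ'.2.trans_le (min_le_right _ _)).le hb
          (fun s hs hfar r hr ↦ hosc s hs ρ (hρ'.2.trans_le (min_le_left _ _)) hfar r hr) k hn0
    _ ≤ c := by rw [hηq, mul_add]; linarith

lemma measurable_avgModCont [MeasurableSpace Ω] (hmeas : Measurable (Function.uncurry σ))
    (hpaths : (∀ ω, IsCadlag (fun s => σ s ω)) ∨ (∀ ω, IsCaglad (fun s => σ s ω)))
    (hη : 0 ≤ η) (hηδ : η ≤ δ) (hb : ∀ s ∈ Ici (-δ), ∀ ω, |σ s ω| ≤ M) (k n : ℕ) :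
    Measurable (avgModCont σ q t k n η) :=
  measurable_const.mul <| Finset.measurable_sum _ fun i _ ↦
    (measurable_modCont hmeas hpaths hη fun ω r hr ↦
      hb r (Icc_sub_add_subset_Ici_neg (by positivity) hηδ hr) ω).pow_const q

end AvgModCont

lemma tendsto_limsup_of_eventually_le {ι : Type*} {l : Filter ι} {u : ι → ℕ → ℝ}
    (h0 : ∀ i n, 0 ≤ u i n) (h : ∀ c > 0, ∀ᶠ i in l, ∀ᶠ n in atTop, u i n ≤ c) :
    Tendsto (fun i ↦ limsup (u i) atTop) l (𝓝 0) := by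
  refine Metric.tendsto_nhds.2 fun c hc ↦ ?_
  filter_upwards [h (c / 2) (half_pos hc)] with i hi
  have hle : limsup (u i) atTop ≤ c / 2 :=
    limsup_le_of_le (isCoboundedUnder_le_of_le atTop (h0 i)) hi
  have hge : 0 ≤ limsup (u i) atTop :=
    le_limsup_of_frequently_le (Frequently.of_forall (h0 i)) (isBoundedUnder_of_eventually_le hi)
  rw [Real.dist_eq, sub_zero, abs_of_nonneg hge]
  linarith

lemma tendsto_limsup_ofReal_of_eventually_le {ι : Type*} {l : Filter ι} {u : ι → ℕ → ℝ}
    (h : ∀ c > 0, ∀ᶠ i in l, ∀ᶠ n in atTop, u i n ≤ c) :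
    Tendsto (fun i ↦ limsup (fun n ↦ ENNReal.ofReal (u i n)) atTop) l (𝓝 0) := by
  refine ENNReal.tendsto_nhds_zero.2 fun e he ↦ ?_
  rcases eq_or_ne e ⊤ with rfl | hne
  · exact Eventually.of_forall fun _ ↦ le_top
  filter_upwards [h e.toReal (ENNReal.toReal_pos he.ne' hne)] with i hi
  exact limsup_le_of_le (by isBoundedDefault)
    (hi.mono fun n hn ↦ ENNReal.ofReal_le_of_le_toReal hn)

/-- Reverse Fatou in `n`, then dominated convergence in `i`. -/
lemma tendsto_limsup_lintegral_of_tendsto_limsup {ι Ω : Type*} [MeasurableSpace Ω]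
    {μ : Measure Ω} [IsFiniteMeasure μ] {l : Filter ι} [l.IsCountablyGenerated]
    {F : ι → ℕ → Ω → ℝ≥0∞} {C : ℝ≥0∞} (hC : C ≠ ∞)
    (hmeas : ∀ᶠ i in l, ∀ n, Measurable (F i n)) (hle : ∀ᶠ i in l, ∀ n ω, F i n ω ≤ C)
    (hlim : ∀ ω, Tendsto (fun i ↦ limsup (F i · ω) atTop) l (𝓝 0)) :
    Tendsto (fun i ↦ limsup (fun n ↦ ∫⁻ ω, F i n ω ∂μ) atTop) l (𝓝 0) := by
  have hfin : ∫⁻ _, C ∂μ ≠ ∞ := by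
    rw [lintegral_const]; exact ENNReal.mul_ne_top hC (measure_ne_top μ univ)
  have hint : Tendsto (fun i ↦ ∫⁻ ω, limsup (F i · ω) atTop ∂μ) l (𝓝 0) := by
    simpa using tendsto_lintegral_filter_of_dominated_convergence (fun _ ↦ C)
      (hmeas.mono fun _ h ↦ .limsup h)
      (hle.mono fun _ h ↦ ae_of_all _ fun ω ↦ limsup_le_of_le (by isBoundedDefault)
        (Eventually.of_forall (h · ω))) hfin (ae_of_all _ hlim)
  refine tendsto_of_tendsto_of_tendsto_of_le_of_le' tendsto_const_nhds hint
    (Eventually.of_forall fun _ ↦ zero_le) ?_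
  filter_upwards [hmeas, hle] with i hm hb
  exact limsup_lintegral_le _ hm (fun n ↦ ae_of_all _ (hb n)) hfin

lemma tendsto_limsup_lintegral_avgModCont {Ω : Type*} [MeasurableSpace Ω] (P : Measure Ω)
    [IsFiniteMeasure P] {σ : ℝ → Ω → ℝ} (hmeas : Measurable (Function.uncurry σ))
    (hpaths : (∀ ω, IsCadlag (fun s => σ s ω)) ∨ (∀ ω, IsCaglad (fun s => σ s ω)))
    {δ M q t : ℝ} (hδ : 0 < δ) (hb : ∀ s ∈ Ici (-δ), ∀ ω, |σ s ω| ≤ M) (hq : 0 < q)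
    (ht : 0 ≤ t) (k : ℕ) :
    Tendsto (fun ρ ↦ limsup (fun n ↦ ∫⁻ ω, ENNReal.ofReal (avgModCont σ q t k n ρ ω) ∂P) atTop)
      (𝓝[>] 0) (𝓝 0) := by
  have hsmall : ∀ᶠ ρ in 𝓝[>] (0 : ℝ), ρ ∈ Ioc 0 δ := Ioc_mem_nhdsGT hδ
  refine tendsto_limsup_lintegral_of_tendsto_limsup ENNReal.ofReal_ne_top
    (C := ENNReal.ofReal ((t + 1) * (2 * M) ^ q))
    (hsmall.mono fun ρ hρ n ↦
      (measurable_avgModCont hmeas hpaths hρ.1.le hρ.2 hb k n).ennreal_ofReal)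
    (hsmall.mono fun ρ hρ n ω ↦ ENNReal.ofReal_le_ofReal
      (avgModCont_le hq ht hρ.1.le hρ.2 (fun r hr ↦ hb r hr ω) k n))
    fun ω ↦ tendsto_limsup_ofReal_of_eventually_le fun c hc ↦
      eventually_avgModCont_le (hpaths.imp (· ω) (· ω)) hδ (fun r hr ↦ hb r hr ω) hq ht k hc

section LqNorm

variable {Ω : Type*} [MeasurableSpace Ω] (P : Measure Ω) (q : ℝ) (Y : Ω → ℝ)

lemma lqNorm_nonneg : 0 ≤ lqNorm P q Y :=
  Real.rpow_nonneg (integral_nonneg fun _ ↦ Real.rpow_nonneg (abs_nonneg _) q) _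

lemma lqNorm_rpow (α : ℝ) : lqNorm P q Y ^ α = (∫ ω, |Y ω| ^ q ∂P) ^ (α / q) := by
  rw [lqNorm, ← Real.rpow_mul (integral_nonneg fun _ ↦ Real.rpow_nonneg (abs_nonneg _) q),
    one_div_mul_eq_div]

end LqNorm

lemma exists_rpow_le_add_mul {β B c : ℝ} (hβ : 0 < β) (hc : 0 < c) :
    ∃ K > 0, ∀ x ∈ Icc 0 B, x ^ β ≤ c + K * x := by
  set τ := c ^ (1 / β)
  have hτ : 0 < τ := Real.rpow_pos_of_pos hc _
  have hτβ : τ ^ β = c := by rw [← Real.rpow_mul hc.le, one_div_mul_cancel hβ.ne', Real.rpow_one]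
  refine ⟨(|B| ^ β + 1) / τ, by positivity, fun x hx ↦ ?_⟩
  rcases le_or_gt x τ with hxτ | hτx
  · have := Real.rpow_le_rpow hx.1 hxτ hβ.le
    nlinarith [hx.1, (by positivity : 0 ≤ (|B| ^ β + 1) / τ)]
  · have hxB : x ^ β ≤ |B| ^ β := Real.rpow_le_rpow hx.1 (hx.2.trans (le_abs_self B)) hβ.le
    have : (|B| ^ β + 1) / τ * τ ≤ (|B| ^ β + 1) / τ * x :=
      mul_le_mul_of_nonneg_left hτx.le (by positivity)
    rw [div_mul_cancel₀ _ hτ.ne'] at this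
    linarith [hc]

lemma one_div_mul_sum_lqNorm_rpow_le {Ω : Type*} [MeasurableSpace Ω] (P : Measure Ω)
    [IsProbabilityMeasure P] {σ : ℝ → Ω → ℝ} (hmeas : Measurable (Function.uncurry σ))
    (hpaths : (∀ ω, IsCadlag (fun s => σ s ω)) ∨ (∀ ω, IsCaglad (fun s => σ s ω)))
    {δ M q t α c K η η' : ℝ} (hb : ∀ s ∈ Ici (-δ), ∀ ω, |σ s ω| ≤ M) (hq : 0 < q)
    (ht : 0 ≤ t) (hc : 0 ≤ c) (hK : ∀ x ∈ Icc 0 ((2 * M) ^ q), x ^ (α / q) ≤ c + K * x)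
    (hK0 : 0 ≤ K) (hη : 0 ≤ η) (hηη' : η ≤ η') (hη'δ : η' ≤ δ) (k n : ℕ) :
    1 / (n : ℝ) * ∑ i ∈ Finset.Icc k ⌊(n : ℝ) * t⌋₊, lqNorm P q (modCont σ ((i : ℝ) / n) η) ^ α ≤
      (t + 1) * c + K * (∫⁻ ω, ENNReal.ofReal (avgModCont σ q t k n η' ω) ∂P).toReal := by
  set I := Finset.Icc k ⌊(n : ℝ) * t⌋₊
  set Y : ℕ → Ω → ℝ := fun i ω ↦ modCont σ ((i : ℝ) / n) η' ω ^ q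
  have hη' : 0 ≤ η' := hη.trans hηη'
  have hYint (i : ℕ) : Integrable (Y i) P := by
    have hmeasY : Measurable (Y i) := (measurable_modCont hmeas hpaths hη' fun ω r hr ↦
      hb r (Icc_sub_add_subset_Ici_neg (by positivity) hη'δ hr) ω).pow_const q
    refine .of_bound hmeasY.aestronglyMeasurable ((2 * M) ^ q) (ae_of_all _ fun ω ↦ ?_)
    rw [Real.norm_of_nonneg (Real.rpow_nonneg (modCont_nonneg σ ω) q)]
    exact modCont_rpow_le (by positivity) hq hη' hη'δ (fun r hr ↦ hb r hr ω)
  have hterm (i : ℕ) : lqNorm P q (modCont σ ((i : ℝ) / n) η) ^ α ≤ c + K * ∫ ω, Y i ω ∂P := by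
    have hmono : ∫ ω, |modCont σ ((i : ℝ) / n) η ω| ^ q ∂P ≤ ∫ ω, Y i ω ∂P :=
      integral_mono_of_nonneg (ae_of_all _ fun _ ↦ Real.rpow_nonneg (abs_nonneg _) q) (hYint i)
        (ae_of_all _ fun ω ↦ by
          dsimp only [Y]
          rw [abs_of_nonneg (modCont_nonneg σ ω)]
          exact Real.rpow_le_rpow (modCont_nonneg σ ω) (modCont_mono σ ω hη hηη'
            fun r hr ↦ hb r (Icc_sub_add_subset_Ici_neg (by positivity) hη'δ hr) ω) hq.le)
    have hbound : ∫ ω, Y i ω ∂P ≤ (2 * M) ^ q := by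
      simpa using integral_mono_of_nonneg (μ := P) (ae_of_all _ fun _ ↦ Real.rpow_nonneg
        (modCont_nonneg σ _) q) (integrable_const ((2 * M) ^ q)) (ae_of_all _ fun ω ↦
          modCont_rpow_le (by positivity) hq hη' hη'δ (fun r hr ↦ hb r hr ω))
    rw [lqNorm_rpow]
    exact (hK _ ⟨integral_nonneg fun _ ↦ Real.rpow_nonneg (abs_nonneg _) q,
      hmono.trans hbound⟩).trans (by gcongr)
  have hexp : (∫⁻ ω, ENNReal.ofReal (avgModCont σ q t k n η' ω) ∂P).toReal =
      1 / (n : ℝ) * ∑ i ∈ I, ∫ ω, Y i ω ∂P := by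
    rw [← integral_eq_lintegral_of_nonneg_ae (ae_of_all _ fun _ ↦ avgModCont_nonneg k n)
      (measurable_avgModCont hmeas hpaths hη' hη'δ hb k n).aestronglyMeasurable,
      ← integral_finsetSum I fun i _ ↦ hYint i, ← integral_const_mul]
    rfl
  calc 1 / (n : ℝ) * ∑ i ∈ I, lqNorm P q (modCont σ ((i : ℝ) / n) η) ^ α
      ≤ 1 / (n : ℝ) * ∑ i ∈ I, (c + K * ∫ ω, Y i ω ∂P) := by
        gcongr with i; exact hterm i
    _ = 1 / (n : ℝ) * ∑ _i ∈ I, c + K * (1 / (n : ℝ) * ∑ i ∈ I, ∫ ω, Y i ω ∂P) := by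
        rw [Finset.sum_add_distrib, ← Finset.mul_sum]; ring
    _ ≤ (t + 1) * c + K * (∫⁻ ω, ENNReal.ofReal (avgModCont σ q t k n η' ω) ∂P).toReal := by
        rw [hexp]
        gcongr ?_ + _
        exact one_div_mul_sum_Icc_floor_le ht hc k n fun _ _ ↦ le_rfl

theorem stmt_9_general
    {Ω : Type*} [MeasurableSpace Ω] (P : Measure Ω) [IsProbabilityMeasure P]
    (δ : ℝ) (hδ : 0 < δ) (k : ℕ)
    (σ : ℝ → Ω → ℝ)
    (hmeas : Measurable (Function.uncurry σ))
    (hpaths : (∀ ω, IsCadlag (fun s => σ s ω)) ∨ (∀ ω, IsCaglad (fun s => σ s ω)))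
    (M : ℝ)
    (hbound : ∀ s ∈ Set.Ici (-δ), ∀ ω, |σ s ω| ≤ M)
    (α q t : ℝ) (hα : 0 < α) (hq : 0 < q) (ht : 0 < t)
    (a : ℕ → ℝ) (ha : Filter.Tendsto a Filter.atTop (nhds 0)) :
    Filter.Tendsto
      (fun ε : ℝ => Filter.limsup
        (fun n : ℕ => (1 / (n : ℝ)) *
          ∑ i ∈ Finset.Icc k (Nat.floor ((n : ℝ) * t)),
            (lqNorm P q (modCont σ ((i : ℝ) / n) (ε + |a n|))) ^ α)
        Filter.atTop)
      (nhdsWithin 0 (Set.Ioi 0)) (nhds 0) := by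
  refine tendsto_limsup_of_eventually_le (fun ε n ↦ mul_nonneg (by positivity)
    (Finset.sum_nonneg fun _ _ ↦ Real.rpow_nonneg (lqNorm_nonneg _ _ _) _)) fun c hc ↦ ?_
  have hc' : 0 < c / (2 * (t + 1)) := div_pos hc (by linarith)
  obtain ⟨K, hK0, hK⟩ := exists_rpow_le_add_mul (B := (2 * M) ^ q) (div_pos hα hq) hc'
  have hdouble : Tendsto (2 * ·) (𝓝[>] (0 : ℝ)) (𝓝[>] 0) :=
    tendsto_nhdsWithin_of_tendsto_nhds_of_eventually_within _
      (by simpa using ((continuous_const_mul (2 : ℝ)).tendsto 0).mono_left nhdsWithin_le_nhds)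
      (eventually_nhdsWithin_of_forall fun ε (hε : 0 < ε) ↦ mem_Ioi.2 (mul_pos two_pos hε))
  have hE := (tendsto_limsup_lintegral_avgModCont P hmeas hpaths hδ hbound hq ht.le k).comp
    hdouble
  have hcK : 0 < c / (2 * K) := div_pos hc (mul_pos two_pos hK0)
  filter_upwards [hE.eventually (gt_mem_nhds (ENNReal.ofReal_pos.2 hcK)),
    Ioo_mem_nhdsGT (half_pos hδ)] with ε hεE hε
  have han : ∀ᶠ n in atTop, |a n| ≤ ε := by
    simpa using ha.abs.eventually (ge_mem_nhds (by simpa using hε.1))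
  filter_upwards [eventually_lt_of_limsup_lt hεE, han] with n hn han
  calc _ ≤ (t + 1) * (c / (2 * (t + 1))) +
        K * (∫⁻ ω, ENNReal.ofReal (avgModCont σ q t k n (2 * ε) ω) ∂P).toReal :=
      one_div_mul_sum_lqNorm_rpow_le P hmeas hpaths hbound hq ht.le hc'.le hK hK0.le
        (add_nonneg hε.1.le (abs_nonneg _)) (by linarith) (by linarith [hε.2]) k n
    _ ≤ (t + 1) * (c / (2 * (t + 1))) + K * (c / (2 * K)) := by
        gcongr
        exact ENNReal.toReal_le_of_le_ofReal hcK.le hn.le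
    _ = c := by field_simp; ring

/-- Lemma 4.9: the averaged moduli of continuity of a bounded càdlàg (or càglàd) process
vanish in the double limit. -/
theorem stmt_9
    {Ω : Type*} [MeasurableSpace Ω] (P : Measure Ω) [IsProbabilityMeasure P]
    (δ : ℝ) (hδ : 0 < δ) (k : ℕ) (hk : 1 ≤ k)
    (σ : ℝ → Ω → ℝ)
    (hmeas : Measurable (Function.uncurry σ))
    (hpaths : (∀ ω, IsCadlag (fun s => σ s ω)) ∨ (∀ ω, IsCaglad (fun s => σ s ω)))
    (M : ℝ) (hM : 0 < M)
    (hbound : ∀ s ∈ Set.Ici (-δ), ∀ ω, |σ s ω| ≤ M)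
    (α q t : ℝ) (hα : 0 < α) (hq : 0 < q) (ht : 0 < t)
    (a : ℕ → ℝ) (ha : Filter.Tendsto a Filter.atTop (nhds 0)) :
    Filter.Tendsto
      (fun ε : ℝ => Filter.limsup
        (fun n : ℕ => (1 / (n : ℝ)) *
          ∑ i ∈ Finset.Icc k (Nat.floor ((n : ℝ) * t)),
            (lqNorm P q (modCont σ ((i : ℝ) / n) (ε + |a n|))) ^ α)
        Filter.atTop)
      (nhdsWithin 0 (Set.Ioi 0)) (nhds 0) :=
  stmt_9_general P δ hδ k σ hmeas hpaths M hbound α q t hα hq ht a ha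

end
end

section
/- Let β ∈ (0, 2) satisfy α + 1/β < k, assume in addition ∫_δ^∞ |g^{(k)}(t)|^β dt < ∞, and let σ : ℝ × Ω → ℝ be a jointly measurable process on a probability space (Ω, F, P) with |σ_s(ω)| ≤ M for all s ∈ [−δ, ∞), ω ∈ Ω, for some M > 0, such that E[ ∫_{−∞}^{−δ} |g^{(k)}(−s) σ_s|^β ds ] < ∞. Then for every ε ∈ (0, δ] there exists a constant C > 0 such that for all integers n ≥ 2k/ε and all i ∈ {k, …, n}: E[ ∫_{i/n−ε}^{i/n} |g_{i,n}(s) σ_s|^β ds ] + ∫_{i/n−ε}^{i/n} |g_{i,n}(s)|^β ds ≤ C n^{−αβ−1}, and E[ ∫_{−∞}^{i/n−ε} |g_{i,n}(s) σ_s|^β ds ] + ∫_{−∞}^{i/n−ε} |g_{i,n}(s)|^β ds ≤ C n^{−kβ}. -/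
/-!
Writing `g_{i,n}(s)` as the `k`-th forward difference of `g` with step `1/n` at `(i - k)/n - s`,
the mean value theorem applied `k` times bounds it by `n^{-k}` times the supremum of `|g^{(k)}|`
on `[(i - k)/n - s, i/n - s]`; directly, it is at most `2^k C₁ (i/n - s)^α`.

Within `2k/n` of `i/n` the direct bound gives a contribution of order `n^{-αβ-1}`. On the rest
of `(i/n - ε, i/n]` the bound `|g^{(k)}(t)| ≤ C₁ t^{α-k}` gives an integrand of order
`n^{-kβ} (i/n - s)^{-p}` with `p = (k - α)β > 1`, whose integral over `s ≤ i/n - 2k/n` is again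
of order `n^{-αβ-1}`. Below `i/n - ε` the argument of `g^{(k)}` stays above `ε/2`, where
`|g^{(k)}|` is bounded (continuity on a compact interval, monotonicity beyond `δ`), and for
`s < -δ` monotonicity gives `|g_{i,n}(s)| ≤ n^{-k} |g^{(k)}(-s)|`, so that the integrability
hypotheses on the tail yield the order `n^{-kβ}`.
-/

open MeasureTheory Set
open scoped ENNReal

noncomputable section

/-- `g_{i,n}(s) = Σ_{j=0}^k (−1)^j · binom(k, j) · g((i−j)/n − s)`. -/
def kernelIncrement (g : ℝ → ℝ) (k n i : ℕ) (s : ℝ) : ℝ :=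
  ∑ j ∈ Finset.range (k + 1),
    (-1 : ℝ) ^ j * (k.choose j) * g (((i : ℝ) - j) / n - s)

open Finset
open scoped fwdDiff

theorem hasDerivAt_iterate_fwdDiff {f : ℝ → ℝ} {h t : ℝ} {k : ℕ}
    (hf : ∀ j ≤ k, DifferentiableAt ℝ f (t + j * h)) :
    HasDerivAt ((Δ_[h])^[k] f) ((Δ_[h])^[k] (deriv f) t) t := by
  rw [funext (fwdDiff_iter_eq_sum_shift h f k), fwdDiff_iter_eq_sum_shift]
  refine HasDerivAt.fun_sum fun j hj => HasDerivAt.fun_const_smul _ ?_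
  rw [nsmul_eq_mul]
  exact (hf j (Nat.lt_succ_iff.mp (mem_range.mp hj))).hasDerivAt.comp_add_const t _

theorem abs_iterate_fwdDiff_le {U : Set ℝ} (hU : IsOpen U) {k : ℕ} {f : ℝ → ℝ}
    (hf : ContDiffOn ℝ k f U) {h x B : ℝ} (hh : 0 ≤ h) (hxU : Icc x (x + k * h) ⊆ U)
    (hB : ∀ t ∈ Icc x (x + k * h), |iteratedDeriv k f t| ≤ B) :
    |(Δ_[h])^[k] f x| ≤ h ^ k * B := by
  induction k generalizing f x with
  | zero => simpa using hB x (by simp)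
  | succ k ih =>
    have hdiff : DifferentiableOn ℝ f U := hf.differentiableOn (by simp)
    have hderiv : ContDiffOn ℝ k (deriv f) U := hf.deriv_of_isOpen hU (by simp)
    have hsub : ∀ t ∈ Icc x (x + h), Icc t (t + k * h) ⊆ Icc x (x + (k + 1 : ℕ) * h) :=
      fun t ht u hu => ⟨by linarith [ht.1, hu.1], by push_cast; linarith [ht.2, hu.2]⟩
    have hshift : ∀ t (j : ℕ), j ≤ k → t + j * h ∈ Icc t (t + k * h) := fun t j hj =>
      ⟨by nlinarith, by nlinarith [(Nat.cast_le (α := ℝ)).2 hj]⟩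
    have hF : ∀ t ∈ Icc x (x + h), HasDerivWithinAt ((Δ_[h])^[k] f) ((Δ_[h])^[k] (deriv f) t)
        (Icc x (x + h)) t := fun t ht =>
      (hasDerivAt_iterate_fwdDiff fun j hj => hdiff.differentiableAt
        (hU.mem_nhds (hxU (hsub t ht (hshift t j hj))))).hasDerivWithinAt
    have hF' : ∀ t ∈ Ico x (x + h), ‖(Δ_[h])^[k] (deriv f) t‖ ≤ h ^ k * B := fun t ht =>
      ih hderiv ((hsub t (Ico_subset_Icc_self ht)).trans hxU) fun u hu => by
        rw [← iteratedDeriv_succ']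
        exact hB u (hsub t (Ico_subset_Icc_self ht) hu)
    have hmvt := norm_image_sub_le_of_norm_deriv_le_segment' hF hF' (x + h)
      (right_mem_Icc.2 (by linarith))
    rw [Function.iterate_succ_apply', pow_succ, mul_right_comm]
    simpa only [fwdDiff, Real.norm_eq_abs, add_sub_cancel_left] using hmvt

theorem kernelIncrement_eq_iterate_fwdDiff (g : ℝ → ℝ) (k n i : ℕ) (s : ℝ) :
    kernelIncrement g k n i s = (Δ_[(n : ℝ)⁻¹])^[k] g (((i : ℝ) - k) / n - s) := by
  rw [fwdDiff_iter_eq_sum_shift, kernelIncrement, ← sum_range_reflect]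
  refine sum_congr rfl fun j hj => ?_
  have hjk : j ≤ k := Nat.lt_succ_iff.mp (mem_range.mp hj)
  rw [show k + 1 - 1 - j = k - j by omega, Nat.choose_symm hjk, zsmul_eq_mul, nsmul_eq_mul]
  push_cast [Nat.cast_sub hjk]
  ring_nf

theorem abs_kernelIncrement_le_of_abs_iteratedDeriv_le {g : ℝ → ℝ} {k n i : ℕ} {s B : ℝ}
    (hg : ContDiffOn ℝ k g (Ioi 0)) (hpos : 0 < ((i : ℝ) - k) / n - s)
    (hB : ∀ t ∈ Icc (((i : ℝ) - k) / n - s) ((i : ℝ) / n - s), |iteratedDeriv k g t| ≤ B) :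
    |kernelIncrement g k n i s| ≤ B / n ^ k := by
  have hend : ((i : ℝ) - k) / n - s + k * (n : ℝ)⁻¹ = (i : ℝ) / n - s := by ring
  rw [kernelIncrement_eq_iterate_fwdDiff, div_eq_inv_mul B, ← inv_pow]
  refine abs_iterate_fwdDiff_le isOpen_Ioi hg (by positivity) ?_ (hend ▸ hB)
  rw [hend]
  exact fun t ht => hpos.trans_le ht.1

theorem abs_kernelIncrement_le_of_abs_le_rpow {g : ℝ → ℝ} {k n i : ℕ} {s α δ C₁ : ℝ}
    (hα : 0 ≤ α) (hC₁ : 0 ≤ C₁) (hg0 : ∀ t ≤ (0 : ℝ), g t = 0)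
    (hgα : ∀ t ∈ Ioo (0 : ℝ) δ, |g t| ≤ C₁ * t ^ α)
    (hs : 0 ≤ (i : ℝ) / n - s) (hsδ : (i : ℝ) / n - s < δ) :
    |kernelIncrement g k n i s| ≤ 2 ^ k * C₁ * ((i : ℝ) / n - s) ^ α := by
  have hterm : ∀ j : ℕ, |g (((i : ℝ) - j) / n - s)| ≤ C₁ * ((i : ℝ) / n - s) ^ α := by
    intro j
    have hle : ((i : ℝ) - j) / n - s ≤ (i : ℝ) / n - s := by
      have : 0 ≤ (j : ℝ) / n := by positivity
      rw [sub_div]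
      linarith
    rcases le_or_gt (((i : ℝ) - j) / n - s) 0 with hneg | hpos
    · rw [hg0 _ hneg, abs_zero]
      positivity
    · exact (hgα _ ⟨hpos, hle.trans_lt hsδ⟩).trans
        (mul_le_mul_of_nonneg_left (Real.rpow_le_rpow hpos.le hle hα) hC₁)
  calc |kernelIncrement g k n i s|
      ≤ ∑ j ∈ range (k + 1), (k.choose j : ℝ) * |g (((i : ℝ) - j) / n - s)| := by
        refine (abs_sum_le_sum_abs _ _).trans_eq (sum_congr rfl fun j _ => ?_)
        simp [abs_mul]
    _ ≤ ∑ j ∈ range (k + 1), (k.choose j : ℝ) * (C₁ * ((i : ℝ) / n - s) ^ α) := by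
        gcongr with j
        exact hterm j
    _ = 2 ^ k * C₁ * ((i : ℝ) / n - s) ^ α := by
        rw [← sum_mul, ← Nat.cast_sum, Nat.sum_range_choose]
        push_cast
        ring

theorem ContDiffOn.continuousOn_iteratedDeriv_of_isOpen {f : ℝ → ℝ} {U : Set ℝ} {k : ℕ}
    (hf : ContDiffOn ℝ k f U) (hU : IsOpen U) : ContinuousOn (iteratedDeriv k f) U :=
  (hf.continuousOn_iteratedDerivWithin le_rfl hU.uniqueDiffOn).congr
    (iteratedDerivWithin_of_isOpen hU).symm

theorem exists_abs_le_of_continuousOn_of_antitoneOn {f : ℝ → ℝ} {a δ : ℝ}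
    (hf : ContinuousOn f (Ici a)) (hanti : AntitoneOn (fun t => |f t|) (Ioi δ)) :
    ∃ K, ∀ t, a ≤ t → |f t| ≤ K := by
  set b := max a δ + 1
  have hab : a ≤ b := by linarith [le_max_left a δ]
  have hδb : δ < b := by linarith [le_max_right a δ]
  obtain ⟨K, hK⟩ :=
    (isCompact_Icc (a := a) (b := b)).exists_bound_of_continuousOn (hf.mono Icc_subset_Ici_self)
  refine ⟨K, fun t ht => ?_⟩
  rcases le_or_gt t b with htb | hbt
  · exact hK t ⟨ht, htb⟩
  · exact (hanti hδb (hδb.trans hbt) hbt.le).trans (hK b ⟨hab, le_rfl⟩)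

theorem setLIntegral_Iic_comp_sub_left (c a : ℝ) (f : ℝ → ℝ≥0∞) :
    ∫⁻ s in Iic (c - a), f (c - s) = ∫⁻ u in Ici a, f u := by
  have hpre : (fun s => c - s) ⁻¹' Ici a = Iic (c - a) := by
    ext s
    simp [le_sub_comm]
  rw [← hpre]
  exact (Measure.measurePreserving_sub_left volume c).setLIntegral_comp_preimage_emb
    (MeasurableEquiv.subLeft c).measurableEmbedding f _

theorem setLIntegral_Iic_sub_rpow_neg {c a p : ℝ} (ha : 0 < a) (hp : 1 < p) :
    ∫⁻ s in Iic (c - a), ENNReal.ofReal ((c - s) ^ (-p)) =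
      ENNReal.ofReal (a ^ (1 - p) / (p - 1)) := by
  rw [setLIntegral_Iic_comp_sub_left c a fun u => ENNReal.ofReal (u ^ (-p)),
    setLIntegral_congr Ioi_ae_eq_Ici.symm, ← ofReal_integral_eq_lintegral_ofReal
      (integrableOn_Ioi_rpow_of_lt (by linarith) ha)
      (ae_restrict_of_forall_mem measurableSet_Ioi fun u hu => Real.rpow_nonneg (ha.trans hu).le _),
    integral_Ioi_rpow_of_lt (by linarith) ha]
  congr 1
  rw [show -p + 1 = 1 - p by ring, ← neg_sub p 1, div_neg, neg_div, neg_neg]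

theorem div_rpow_eq_mul_rpow_neg {c x : ℝ} (hc : 0 ≤ c) (hx : 0 ≤ x) (q : ℝ) :
    (c / x) ^ q = c ^ q * x ^ (-q) := by
  rw [Real.div_rpow hc hx, Real.rpow_neg hx, div_eq_mul_inv]

theorem div_pow_rpow {y x : ℝ} (hy : 0 ≤ y) (hx : 0 ≤ x) (k : ℕ) (β : ℝ) :
    (y / x ^ k) ^ β = x ^ (-(k : ℝ) * β) * y ^ β := by
  rw [← Real.rpow_natCast, div_rpow_eq_mul_rpow_neg hy (by positivity), ← Real.rpow_mul hx,
    mul_comm, mul_neg, neg_mul]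

theorem ENNReal.le_ofReal_mul_of_le_ofReal_mul {X c : ℝ≥0∞} {x C : ℝ} (hc : c ≠ ⊤) (hx : 0 ≤ x)
    (hC : c.toReal ≤ C) (h : X ≤ ENNReal.ofReal x * c) : X ≤ ENNReal.ofReal (C * x) := by
  calc X ≤ ENNReal.ofReal x * c := h
    _ = ENNReal.ofReal (c.toReal * x) := by
      rw [ENNReal.ofReal_mul ENNReal.toReal_nonneg, ENNReal.ofReal_toReal hc, mul_comm]
    _ ≤ ENNReal.ofReal (C * x) := by gcongr

theorem ofReal_abs_mul_rpow_le {a b M β : ℝ} (hβ : 0 ≤ β) (hb : |b| ≤ M) :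
    ENNReal.ofReal (|a * b| ^ β) ≤ ENNReal.ofReal (M ^ β) * ENNReal.ofReal (|a| ^ β) := by
  rw [← ENNReal.ofReal_mul (Real.rpow_nonneg ((abs_nonneg b).trans hb) _), abs_mul,
    Real.mul_rpow (abs_nonneg _) (abs_nonneg _), mul_comm]
  gcongr

theorem lintegral_setLIntegral_abs_mul_rpow_le {Ω : Type*} [MeasurableSpace Ω] {P : Measure Ω}
    [IsProbabilityMeasure P] {f : ℝ → ℝ} {σ : ℝ → Ω → ℝ} {S : Set ℝ} (hS : MeasurableSet S)
    {M β : ℝ} (hβ : 0 ≤ β) (hσ : ∀ s ∈ S, ∀ ω, |σ s ω| ≤ M) :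
    ∫⁻ ω, (∫⁻ s in S, ENNReal.ofReal (|f s * σ s ω| ^ β)) ∂P
      ≤ ENNReal.ofReal (M ^ β) * ∫⁻ s in S, ENNReal.ofReal (|f s| ^ β) := by
  refine lintegral_le_const (ae_of_all _ fun ω => ?_)
  rw [← lintegral_const_mul' _ _ ENNReal.ofReal_ne_top]
  exact setLIntegral_mono' hS fun s hs => ofReal_abs_mul_rpow_le hβ (hσ s hs ω)

section KernelIncrement

variable {g : ℝ → ℝ} {k n i : ℕ} {α β δ C₁ : ℝ}
  {Ω : Type*} [MeasurableSpace Ω] {P : Measure Ω} [IsProbabilityMeasure P] {σ : ℝ → Ω → ℝ} {M : ℝ}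

theorem setLIntegral_Ioc_kernelIncrement_near_le (hα : 0 ≤ α) (hβ : 0 ≤ β) (hC₁ : 0 ≤ C₁)
    (hg0 : ∀ t ≤ (0 : ℝ), g t = 0) (hgα : ∀ t ∈ Ioo (0 : ℝ) δ, |g t| ≤ C₁ * t ^ α)
    {a : ℝ} (ha : 0 < a) (haδ : a ≤ δ) :
    ∫⁻ s in Ioc ((i : ℝ) / n - a) ((i : ℝ) / n), ENNReal.ofReal (|kernelIncrement g k n i s| ^ β)
      ≤ ENNReal.ofReal ((2 ^ k * C₁) ^ β * a ^ (α * β + 1)) := by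
  calc ∫⁻ s in Ioc ((i : ℝ) / n - a) ((i : ℝ) / n),
        ENNReal.ofReal (|kernelIncrement g k n i s| ^ β)
      ≤ ∫⁻ _ in Ioc ((i : ℝ) / n - a) ((i : ℝ) / n),
          ENNReal.ofReal ((2 ^ k * C₁) ^ β * a ^ (α * β)) := by
        refine setLIntegral_mono' measurableSet_Ioc fun s hs => ENNReal.ofReal_le_ofReal ?_
        have hs0 : 0 ≤ (i : ℝ) / n - s := by linarith [hs.2]
        have hsa : (i : ℝ) / n - s < a := by linarith [hs.1]
        calc |kernelIncrement g k n i s| ^ β ≤ (2 ^ k * C₁ * ((i : ℝ) / n - s) ^ α) ^ β := by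
              gcongr
              exact abs_kernelIncrement_le_of_abs_le_rpow hα hC₁ hg0 hgα hs0 (hsa.trans_le haδ)
          _ ≤ (2 ^ k * C₁ * a ^ α) ^ β := by gcongr
          _ = (2 ^ k * C₁) ^ β * a ^ (α * β) := by
              rw [Real.mul_rpow (by positivity) (by positivity), ← Real.rpow_mul ha.le]
    _ = ENNReal.ofReal ((2 ^ k * C₁) ^ β * a ^ (α * β + 1)) := by
        rw [setLIntegral_const, Real.volume_Ioc, sub_sub_cancel,
          ← ENNReal.ofReal_mul (by positivity), Real.rpow_add_one ha.ne', mul_assoc]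

theorem setLIntegral_Ioc_kernelIncrement_far_le (hβ : 0 ≤ β) (hC₁ : 0 ≤ C₁)
    (hg : ContDiffOn ℝ k g (Ioi 0))
    (hgk : ∀ t ∈ Ioo (0 : ℝ) δ, |iteratedDeriv k g t| ≤ C₁ * t ^ (α - k))
    {p : ℝ} (hp : ((k : ℝ) - α) * β = p) (hp1 : 1 < p) (hk : 0 < k) (hn : 0 < n)
    {ε : ℝ} (hεδ : ε ≤ δ) :
    ∫⁻ s in Ioc ((i : ℝ) / n - ε) ((i : ℝ) / n - 2 * k / n),
        ENNReal.ofReal (|kernelIncrement g k n i s| ^ β)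
      ≤ ENNReal.ofReal (C₁ ^ β * 2 ^ p * ((2 * k) ^ (1 - p) / (p - 1)) * n ^ (-α * β - 1)) := by
  have hnR : (0 : ℝ) < n := Nat.cast_pos.2 hn
  have hkn : (0 : ℝ) < 2 * k / n := by positivity
  have hαk : α - k ≤ 0 := by nlinarith
  set A : ℝ := (n : ℝ) ^ (-(k : ℝ) * β) * (C₁ ^ β * 2 ^ p) with hA
  have hpt : ∀ s ∈ Ioc ((i : ℝ) / n - ε) ((i : ℝ) / n - 2 * k / n),
      ENNReal.ofReal (|kernelIncrement g k n i s| ^ β)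
        ≤ ENNReal.ofReal (A * ((i : ℝ) / n - s) ^ (-p)) := by
    intro s hs
    set u := (i : ℝ) / n - s with hu_def
    have hu : 2 * k / n ≤ u := by linarith [hs.2]
    have hupos : 0 < u := hkn.trans_le hu
    have hlow : u / 2 ≤ ((i : ℝ) - k) / n - s := by
      have h1 : ((i : ℝ) - k) / n - s = u - k / n := by rw [hu_def]; ring
      have h2 : 2 * (k : ℝ) / n = 2 * (k / n) := mul_div_assoc _ _ _
      linarith
    have hK : |kernelIncrement g k n i s| ≤ C₁ * (u / 2) ^ (α - k) / n ^ k := by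
      refine abs_kernelIncrement_le_of_abs_iteratedDeriv_le hg (by linarith) fun t ht => ?_
      have ht0 : 0 < t := by linarith [ht.1]
      refine (hgk t ⟨ht0, by linarith [ht.2, hs.1]⟩).trans ?_
      exact mul_le_mul_of_nonneg_left
        (Real.rpow_le_rpow_of_nonpos (by positivity) (hlow.trans ht.1) hαk) hC₁
    refine ENNReal.ofReal_le_ofReal ((Real.rpow_le_rpow (abs_nonneg _) hK hβ).trans_eq ?_)
    rw [div_pow_rpow (by positivity) hnR.le, Real.mul_rpow hC₁ (by positivity),
      ← Real.rpow_mul (by positivity), div_rpow_eq_mul_rpow_neg hupos.le zero_le_two,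
      show (α - k) * β = -p by linarith, hA]
    ring_nf
  calc ∫⁻ s in Ioc ((i : ℝ) / n - ε) ((i : ℝ) / n - 2 * k / n),
        ENNReal.ofReal (|kernelIncrement g k n i s| ^ β)
      ≤ ∫⁻ s in Iic ((i : ℝ) / n - 2 * k / n), ENNReal.ofReal (A * ((i : ℝ) / n - s) ^ (-p)) :=
        (setLIntegral_mono' measurableSet_Ioc hpt).trans (lintegral_mono_set Ioc_subset_Iic_self)
    _ = ENNReal.ofReal A * ENNReal.ofReal ((2 * k / n) ^ (1 - p) / (p - 1)) := by
        simp_rw [ENNReal.ofReal_mul (by positivity : 0 ≤ A)]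
        rw [lintegral_const_mul' _ _ ENNReal.ofReal_ne_top, setLIntegral_Iic_sub_rpow_neg hkn hp1]
    _ = _ := by
        rw [← ENNReal.ofReal_mul (by positivity), div_rpow_eq_mul_rpow_neg (by positivity) hnR.le]
        congr 1
        rw [show -α * β - 1 = -(k : ℝ) * β + -(1 - p) by linarith, Real.rpow_add hnR]
        ring

theorem exists_setLIntegral_Ioc_kernelIncrement_le (hα : 0 < α) (hβ : 0 < β) (hC₁ : 0 ≤ C₁)
    (hg0 : ∀ t ≤ (0 : ℝ), g t = 0) (hg : ContDiffOn ℝ k g (Ioi 0))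
    (hgα : ∀ t ∈ Ioo (0 : ℝ) δ, |g t| ≤ C₁ * t ^ α)
    (hgk : ∀ t ∈ Ioo (0 : ℝ) δ, |iteratedDeriv k g t| ≤ C₁ * t ^ (α - k))
    (hαβk : α + 1 / β < k) {ε : ℝ} (hε : 0 < ε) (hεδ : ε ≤ δ) :
    ∃ C₀ : ℝ, ∀ n : ℕ, 2 * k / ε ≤ n → ∀ i : ℕ,
      ∫⁻ s in Ioc ((i : ℝ) / n - ε) ((i : ℝ) / n),
          ENNReal.ofReal (|kernelIncrement g k n i s| ^ β)
        ≤ ENNReal.ofReal (C₀ * n ^ (-α * β - 1)) := by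
  set p := ((k : ℝ) - α) * β with hp
  have hp1 : 1 < p := (div_lt_iff₀ hβ).1 (by linarith)
  have hkR : (0 : ℝ) < k := by linarith [one_div_pos.2 hβ]
  refine ⟨C₁ ^ β * 2 ^ p * ((2 * k) ^ (1 - p) / (p - 1)) + (2 ^ k * C₁) ^ β * (2 * k) ^ (α * β + 1),
    fun n hn i => ?_⟩
  have hnR : (0 : ℝ) < n := (by positivity : (0 : ℝ) < 2 * k / ε).trans_le hn
  have h2kn : 2 * k / n ≤ ε := div_le_of_le_mul₀ hnR.le hε.le (by linarith [(div_le_iff₀ hε).1 hn])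
  have h2kn0 : 0 < 2 * k / (n : ℝ) := by positivity
  rw [← Set.Ioc_union_Ioc_eq_Ioc (b := (i : ℝ) / n - 2 * k / n) (by linarith) (by linarith),
    add_mul, ENNReal.ofReal_add (by positivity) (by positivity)]
  refine (lintegral_union_le _ _ _).trans (add_le_add
    (setLIntegral_Ioc_kernelIncrement_far_le hβ.le hC₁ hg hgk hp.symm hp1 (Nat.cast_pos.1 hkR)
      (Nat.cast_pos.1 hnR) hεδ)
    ((setLIntegral_Ioc_kernelIncrement_near_le hα.le hβ.le hC₁ hg0 hgα h2kn0
      (h2kn.trans hεδ)).trans_eq ?_))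
  rw [div_rpow_eq_mul_rpow_neg (by positivity) hnR.le, neg_add', neg_mul, mul_assoc]

theorem setLIntegral_Iic_kernelIncrement_mul_le (hδ : 0 ≤ δ) (hβ : 0 ≤ β)
    (hg : ContDiffOn ℝ k g (Ioi 0)) (hanti : AntitoneOn (fun t => |iteratedDeriv k g t|) (Ioi δ))
    {ε K : ℝ} (hε : 0 < ε) (hK : ∀ t, ε / 2 ≤ t → |iteratedDeriv k g t| ≤ K)
    (hn : 2 * k / ε ≤ n) (hik : k ≤ i) (hin : i ≤ n)
    {τ : ℝ → ℝ} (hτ : ∀ s ∈ Ici (-δ), |τ s| ≤ M) :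
    ∫⁻ s in Iic ((i : ℝ) / n - ε), ENNReal.ofReal (|kernelIncrement g k n i s * τ s| ^ β)
      ≤ ENNReal.ofReal ((n : ℝ) ^ (-(k : ℝ) * β)) *
        ((∫⁻ s in Iic (-δ), ENNReal.ofReal (|iteratedDeriv k g (-s) * τ s| ^ β)) +
          ENNReal.ofReal ((K * M) ^ β * (1 + δ))) := by
  set c := ENNReal.ofReal ((n : ℝ) ^ (-(k : ℝ) * β))
  have hik' : (0 : ℝ) ≤ ((i : ℝ) - k) / n :=
    div_nonneg (sub_nonneg.2 (Nat.cast_le.2 hik)) n.cast_nonneg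
  have hkn : (k : ℝ) / n ≤ ε / 2 :=
    div_le_of_le_mul₀ n.cast_nonneg (by positivity) (by linarith [(div_le_iff₀ hε).1 hn])
  have hin' : (i : ℝ) / n ≤ 1 := div_le_one_of_le₀ (Nat.cast_le.2 hin) n.cast_nonneg
  have htail : ∀ s ∈ Iio (-δ), ENNReal.ofReal (|kernelIncrement g k n i s * τ s| ^ β)
      ≤ c * ENNReal.ofReal (|iteratedDeriv k g (-s) * τ s| ^ β) := by
    intro s hs
    have hs' : δ < -s := by linarith [mem_Iio.1 hs]
    have hKI : |kernelIncrement g k n i s| ≤ |iteratedDeriv k g (-s)| / n ^ k :=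
      abs_kernelIncrement_le_of_abs_iteratedDeriv_le hg (by linarith) fun t ht =>
        hanti hs' (show δ < t by linarith [ht.1]) (by linarith [ht.1])
    rw [← ENNReal.ofReal_mul (by positivity)]
    refine ENNReal.ofReal_le_ofReal ((Real.rpow_le_rpow (abs_nonneg _) ?_ hβ).trans_eq
      (div_pow_rpow (abs_nonneg _) n.cast_nonneg k β))
    rw [abs_mul, abs_mul, ← div_mul_eq_mul_div]
    exact mul_le_mul_of_nonneg_right hKI (abs_nonneg _)
  have hmid : ∀ s ∈ Icc (-δ) ((i : ℝ) / n - ε),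
      ENNReal.ofReal (|kernelIncrement g k n i s * τ s| ^ β)
        ≤ c * ENNReal.ofReal ((K * M) ^ β) := by
    intro s hs
    have hlow : ε / 2 ≤ ((i : ℝ) - k) / n - s := by
      rw [sub_div]
      linarith [hs.2]
    have hKI : |kernelIncrement g k n i s| ≤ K / n ^ k :=
      abs_kernelIncrement_le_of_abs_iteratedDeriv_le hg (by linarith) fun t ht =>
        hK t (hlow.trans ht.1)
    have hK0 : 0 ≤ K := (abs_nonneg _).trans (hK _ le_rfl)
    have hM0 : 0 ≤ M := (abs_nonneg _).trans (hτ s hs.1)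
    rw [← ENNReal.ofReal_mul (by positivity)]
    refine ENNReal.ofReal_le_ofReal ((Real.rpow_le_rpow (abs_nonneg _) ?_ hβ).trans_eq
      (div_pow_rpow (mul_nonneg hK0 hM0) n.cast_nonneg k β))
    rw [abs_mul, mul_div_right_comm]
    exact mul_le_mul hKI (hτ s hs.1) (abs_nonneg _) (by positivity)
  calc ∫⁻ s in Iic ((i : ℝ) / n - ε), ENNReal.ofReal (|kernelIncrement g k n i s * τ s| ^ β)
      ≤ ∫⁻ s in Iio (-δ) ∪ Icc (-δ) ((i : ℝ) / n - ε),
          ENNReal.ofReal (|kernelIncrement g k n i s * τ s| ^ β) :=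
        lintegral_mono_set fun s hs => (lt_or_ge s (-δ)).imp id fun h => ⟨h, hs⟩
    _ ≤ (∫⁻ s in Iio (-δ), c * ENNReal.ofReal (|iteratedDeriv k g (-s) * τ s| ^ β)) +
          ∫⁻ _ in Icc (-δ) ((i : ℝ) / n - ε), c * ENNReal.ofReal ((K * M) ^ β) :=
        (lintegral_union_le _ _ _).trans (add_le_add (setLIntegral_mono' measurableSet_Iio htail)
          (setLIntegral_mono' measurableSet_Icc hmid))
    _ ≤ c * (∫⁻ s in Iic (-δ), ENNReal.ofReal (|iteratedDeriv k g (-s) * τ s| ^ β)) +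
          c * ENNReal.ofReal ((K * M) ^ β) * ENNReal.ofReal (1 + δ) := by
        rw [lintegral_const_mul' _ _ ENNReal.ofReal_ne_top, setLIntegral_const, Real.volume_Icc]
        gcongr
        · exact Iio_subset_Iic_self
        · linarith
    _ = _ := by rw [ENNReal.ofReal_mul' (by linarith), mul_add, mul_assoc]

theorem exists_moment_Ioc_kernelIncrement_le (hα : 0 < α) (hβ : 0 < β) (hC₁ : 0 ≤ C₁)
    (hg0 : ∀ t ≤ (0 : ℝ), g t = 0) (hg : ContDiffOn ℝ k g (Ioi 0))
    (hgα : ∀ t ∈ Ioo (0 : ℝ) δ, |g t| ≤ C₁ * t ^ α)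
    (hgk : ∀ t ∈ Ioo (0 : ℝ) δ, |iteratedDeriv k g t| ≤ C₁ * t ^ (α - k))
    (hαβk : α + 1 / β < k) (hσ : ∀ s ∈ Ici (-δ), ∀ ω, |σ s ω| ≤ M)
    {ε : ℝ} (hε : 0 < ε) (hεδ : ε ≤ δ) :
    ∃ c : ℝ≥0∞, c ≠ ⊤ ∧ ∀ n : ℕ, 2 * k / ε ≤ n → ∀ i : ℕ,
      (∫⁻ ω, (∫⁻ s in Ioc ((i : ℝ) / n - ε) ((i : ℝ) / n),
          ENNReal.ofReal (|kernelIncrement g k n i s * σ s ω| ^ β)) ∂P) +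
        ∫⁻ s in Ioc ((i : ℝ) / n - ε) ((i : ℝ) / n),
          ENNReal.ofReal (|kernelIncrement g k n i s| ^ β)
        ≤ ENNReal.ofReal ((n : ℝ) ^ (-α * β - 1)) * c := by
  obtain ⟨C₀, hC₀⟩ :=
    exists_setLIntegral_Ioc_kernelIncrement_le hα hβ hC₁ hg0 hg hgα hgk hαβk hε hεδ
  refine ⟨(ENNReal.ofReal (M ^ β) + 1) * ENNReal.ofReal C₀, by finiteness, fun n hn i => ?_⟩
  have hσ' : ∀ s ∈ Ioc ((i : ℝ) / n - ε) ((i : ℝ) / n), ∀ ω, |σ s ω| ≤ M := fun s hs =>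
    hσ s (mem_Ici.2 (by linarith [hs.1, (by positivity : (0 : ℝ) ≤ (i : ℝ) / n)]))
  calc _ ≤ (ENNReal.ofReal (M ^ β) + 1) * ∫⁻ s in Ioc ((i : ℝ) / n - ε) ((i : ℝ) / n),
          ENNReal.ofReal (|kernelIncrement g k n i s| ^ β) :=
        (add_le_add (lintegral_setLIntegral_abs_mul_rpow_le measurableSet_Ioc hβ.le hσ')
          le_rfl).trans_eq (by ring)
    _ ≤ (ENNReal.ofReal (M ^ β) + 1) * ENNReal.ofReal (C₀ * n ^ (-α * β - 1)) := by
        gcongr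
        exact hC₀ n hn i
    _ = ENNReal.ofReal ((n : ℝ) ^ (-α * β - 1)) *
          ((ENNReal.ofReal (M ^ β) + 1) * ENNReal.ofReal C₀) := by
        rw [ENNReal.ofReal_mul' (by positivity)]
        ring

theorem exists_moment_Iic_kernelIncrement_le (hδ : 0 ≤ δ) (hβ : 0 ≤ β)
    (hg : ContDiffOn ℝ k g (Ioi 0)) (hanti : AntitoneOn (fun t => |iteratedDeriv k g t|) (Ioi δ))
    (hgkβ : ∫⁻ t in Ioi δ, ENNReal.ofReal (|iteratedDeriv k g t| ^ β) < ⊤)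
    (hσ : ∀ s ∈ Ici (-δ), ∀ ω, |σ s ω| ≤ M)
    (hH : ∫⁻ ω, (∫⁻ s in Iic (-δ), ENNReal.ofReal (|iteratedDeriv k g (-s) * σ s ω| ^ β)) ∂P < ⊤)
    {ε : ℝ} (hε : 0 < ε) :
    ∃ c : ℝ≥0∞, c ≠ ⊤ ∧ ∀ n : ℕ, 2 * k / ε ≤ n → ∀ i : ℕ, k ≤ i → i ≤ n →
      (∫⁻ ω, (∫⁻ s in Iic ((i : ℝ) / n - ε),
          ENNReal.ofReal (|kernelIncrement g k n i s * σ s ω| ^ β)) ∂P) +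
        ∫⁻ s in Iic ((i : ℝ) / n - ε), ENNReal.ofReal (|kernelIncrement g k n i s| ^ β)
        ≤ ENNReal.ofReal ((n : ℝ) ^ (-(k : ℝ) * β)) * c := by
  obtain ⟨K, hK⟩ := exists_abs_le_of_continuousOn_of_antitoneOn
    ((hg.continuousOn_iteratedDeriv_of_isOpen isOpen_Ioi).mono (Ici_subset_Ioi.2 (half_pos hε)))
    hanti
  set H := ∫⁻ ω, (∫⁻ s in Iic (-δ), ENNReal.ofReal (|iteratedDeriv k g (-s) * σ s ω| ^ β)) ∂P
  set J := ∫⁻ s in Iic (-δ), ENNReal.ofReal (|iteratedDeriv k g (-s)| ^ β) with hJ_def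
  have hJ : J ≠ ⊤ := by
    have h := setLIntegral_Iic_comp_sub_left 0 δ fun t => ENNReal.ofReal (|iteratedDeriv k g t| ^ β)
    simp only [zero_sub] at h
    rw [hJ_def, h, ← setLIntegral_congr Ioi_ae_eq_Ici]
    exact hgkβ.ne
  refine ⟨(H + ENNReal.ofReal ((K * M) ^ β * (1 + δ))) + (J + ENNReal.ofReal (K ^ β * (1 + δ))),
    by finiteness, fun n hn i hik hin => ?_⟩
  have hrand : ∫⁻ ω, (∫⁻ s in Iic ((i : ℝ) / n - ε),
      ENNReal.ofReal (|kernelIncrement g k n i s * σ s ω| ^ β)) ∂P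
        ≤ ENNReal.ofReal ((n : ℝ) ^ (-(k : ℝ) * β)) *
          (H + ENNReal.ofReal ((K * M) ^ β * (1 + δ))) := by
    refine (lintegral_mono fun ω => setLIntegral_Iic_kernelIncrement_mul_le hδ hβ hg hanti hε hK
      hn hik hin (hσ · · ω)).trans_eq ?_
    rw [lintegral_const_mul' _ _ ENNReal.ofReal_ne_top, lintegral_add_right _ measurable_const,
      lintegral_const, measure_univ, mul_one]
  have hdet : ∫⁻ s in Iic ((i : ℝ) / n - ε), ENNReal.ofReal (|kernelIncrement g k n i s| ^ β)
      ≤ ENNReal.ofReal ((n : ℝ) ^ (-(k : ℝ) * β)) * (J + ENNReal.ofReal (K ^ β * (1 + δ))) := by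
    simpa only [mul_one] using setLIntegral_Iic_kernelIncrement_mul_le hδ hβ hg hanti hε hK hn
      hik hin (τ := fun _ => 1) (M := 1) fun _ _ => abs_one.le
  exact (add_le_add hrand hdet).trans_eq (mul_add _ _ _).symm

end KernelIncrement

theorem stmt_10_general
    (k : ℕ) (α δ C₁ : ℝ)
    (hα : 0 < α) (hδ : 0 < δ) (hC₁ : 0 < C₁)
    (g : ℝ → ℝ)
    (hg0 : ∀ t ≤ (0 : ℝ), g t = 0)
    (hgsmooth : ContDiffOn ℝ k g (Set.Ioi 0))
    (hgα : ∀ t ∈ Set.Ioo (0 : ℝ) δ, |g t| ≤ C₁ * t ^ α)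
    (hgk : ∀ t ∈ Set.Ioo (0 : ℝ) δ, |iteratedDeriv k g t| ≤ C₁ * t ^ (α - k))
    (hgkdec : ∀ s t : ℝ, δ < s → s ≤ t → |iteratedDeriv k g t| ≤ |iteratedDeriv k g s|)
    (β : ℝ) (hβ0 : 0 < β) (hαβk : α + 1 / β < k)
    (hgkβ : ∫⁻ t in Set.Ioi δ, ENNReal.ofReal (|iteratedDeriv k g t| ^ β) < ⊤)
    {Ω : Type*} [MeasurableSpace Ω] (P : Measure Ω) [IsProbabilityMeasure P]
    (σ : ℝ → Ω → ℝ)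
    (M : ℝ) (hbound : ∀ s ∈ Set.Ici (-δ), ∀ ω, |σ s ω| ≤ M)
    (hH : ∫⁻ ω, (∫⁻ s in Set.Iic (-δ),
        ENNReal.ofReal (|iteratedDeriv k g (-s) * σ s ω| ^ β)) ∂P < ⊤) :
    ∀ ε : ℝ, 0 < ε → ε ≤ δ →
      ∃ C > (0 : ℝ), ∀ n : ℕ, (2 * k / ε : ℝ) ≤ n → ∀ i : ℕ, k ≤ i → i ≤ n →
        ((∫⁻ ω, (∫⁻ s in Set.Ioc ((i : ℝ) / n - ε) ((i : ℝ) / n),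
              ENNReal.ofReal (|kernelIncrement g k n i s * σ s ω| ^ β)) ∂P) +
            (∫⁻ s in Set.Ioc ((i : ℝ) / n - ε) ((i : ℝ) / n),
              ENNReal.ofReal (|kernelIncrement g k n i s| ^ β)) ≤
          ENNReal.ofReal (C * (n : ℝ) ^ (-α * β - 1))) ∧
        ((∫⁻ ω, (∫⁻ s in Set.Iic ((i : ℝ) / n - ε),
              ENNReal.ofReal (|kernelIncrement g k n i s * σ s ω| ^ β)) ∂P) +
            (∫⁻ s in Set.Iic ((i : ℝ) / n - ε),
              ENNReal.ofReal (|kernelIncrement g k n i s| ^ β)) ≤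
          ENNReal.ofReal (C * (n : ℝ) ^ (-(k : ℝ) * β))) := by
  intro ε hε hεδ
  obtain ⟨c₁, hc₁, h₁⟩ := exists_moment_Ioc_kernelIncrement_le (P := P) hα hβ0 hC₁.le hg0
    hgsmooth hgα hgk hαβk hbound hε hεδ
  obtain ⟨c₂, hc₂, h₂⟩ := exists_moment_Iic_kernelIncrement_le hδ.le hβ0.le hgsmooth
    (fun s hs t _ hst => hgkdec s t hs hst) hgkβ hbound hH hε
  refine ⟨c₁.toReal + c₂.toReal + 1, by positivity, fun n hn i hik hin => ⟨?_, ?_⟩⟩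
  · exact ENNReal.le_ofReal_mul_of_le_ofReal_mul hc₁ (by positivity)
      (by linarith [c₂.toReal_nonneg]) (h₁ n hn i)
  · exact ENNReal.le_ofReal_mul_of_le_ofReal_mul hc₂ (by positivity)
      (by linarith [c₁.toReal_nonneg]) (h₂ n hn i hik hin)

/-- Lemma 4.10: moment bounds for the kernel increments against a bounded volatility. -/
theorem stmt_10
    (k : ℕ) (hk : 1 ≤ k) (α δ C₁ : ℝ)
    (hα : 0 < α) (hαk : α < k) (hδ : 0 < δ) (hC₁ : 0 < C₁)
    (g : ℝ → ℝ)
    (hg0 : ∀ t ≤ (0 : ℝ), g t = 0)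
    (hgsmooth : ContDiffOn ℝ k g (Set.Ioi 0))
    (hgα : ∀ t ∈ Set.Ioo (0 : ℝ) δ, |g t| ≤ C₁ * t ^ α)
    (hgk : ∀ t ∈ Set.Ioo (0 : ℝ) δ, |iteratedDeriv k g t| ≤ C₁ * t ^ (α - k))
    (hgkdec : ∀ s t : ℝ, δ < s → s ≤ t → |iteratedDeriv k g t| ≤ |iteratedDeriv k g s|)
    (β : ℝ) (hβ0 : 0 < β) (hβ2 : β < 2) (hαβk : α + 1 / β < k)
    (hgkβ : ∫⁻ t in Set.Ioi δ, ENNReal.ofReal (|iteratedDeriv k g t| ^ β) < ⊤)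
    {Ω : Type*} [MeasurableSpace Ω] (P : Measure Ω) [IsProbabilityMeasure P]
    (σ : ℝ → Ω → ℝ) (hmeas : Measurable (Function.uncurry σ))
    (M : ℝ) (hM : 0 < M) (hbound : ∀ s ∈ Set.Ici (-δ), ∀ ω, |σ s ω| ≤ M)
    (hH : ∫⁻ ω, (∫⁻ s in Set.Iic (-δ),
        ENNReal.ofReal (|iteratedDeriv k g (-s) * σ s ω| ^ β)) ∂P < ⊤) :
    ∀ ε : ℝ, 0 < ε → ε ≤ δ →
      ∃ C > (0 : ℝ), ∀ n : ℕ, (2 * k / ε : ℝ) ≤ n → ∀ i : ℕ, k ≤ i → i ≤ n →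
        ((∫⁻ ω, (∫⁻ s in Set.Ioc ((i : ℝ) / n - ε) ((i : ℝ) / n),
              ENNReal.ofReal (|kernelIncrement g k n i s * σ s ω| ^ β)) ∂P) +
            (∫⁻ s in Set.Ioc ((i : ℝ) / n - ε) ((i : ℝ) / n),
              ENNReal.ofReal (|kernelIncrement g k n i s| ^ β)) ≤
          ENNReal.ofReal (C * (n : ℝ) ^ (-α * β - 1))) ∧
        ((∫⁻ ω, (∫⁻ s in Set.Iic ((i : ℝ) / n - ε),
              ENNReal.ofReal (|kernelIncrement g k n i s * σ s ω| ^ β)) ∂P) +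
            (∫⁻ s in Set.Iic ((i : ℝ) / n - ε),
              ENNReal.ofReal (|kernelIncrement g k n i s| ^ β)) ≤
          ENNReal.ofReal (C * (n : ℝ) ^ (-(k : ℝ) * β))) :=
  stmt_10_general k α δ C₁ hα hδ hC₁ g hg0 hgsmooth hgα hgk hgkdec β hβ0 hαβk hgkβ P σ M hbound hH
end
end
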